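/- arXiv:2002.07839 — 5 statements merged into one kernel-verified Lean document; each statement's English description precedes it below -/
import Mathlib

section
/- Let F be H-smooth and λ-strongly convex with minimizer x*, and suppose the stochastic gradients satisfy sup_x E_{z∼D}‖∇f(x; z) − ∇F(x)‖² ≤ σ². If the stepsize at step t satisfies η_t ≤ 1/(4H), then the iterates of local SGD with M machines satisfy E[F(x̄_t) − F*] ≤ (2/η_t − 2λ) E‖x̄_t − x*‖² − (2/η_t) E‖x̄_{t+1} − x*‖² + 2η_tσ²/M + (4H/M) Σ_{m=1}^M E‖x̄_t − x_t^m‖², where x̄_t = (1/M) Σ_{m=1}^M x_t^m. -/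
set_option maxHeartbeats 1000000

open MeasureTheory ProbabilityTheory
open scoped RealInnerProductSpace BigOperators

/-- `Euc d` is the Euclidean space `ℝ^d`. -/
abbrev Euc (d : ℕ) : Type := EuclideanSpace ℝ (Fin d)

section Aux


variable {Ω : Type*} [MeasurableSpace Ω] {P : Measure Ω}
variable {E : Type*} [NormedAddCommGroup E] [InnerProductSpace ℝ E]

lemma memL2_integrable_inner {f g : Ω → E} (hf : MemLp f 2 P) (hg : MemLp g 2 P) :
    Integrable (fun ω => ⟪f ω, g ω⟫) P := by
  have h := L2.integrable_inner (𝕜 := ℝ) (hf.toLp f) (hg.toLp g)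
  refine h.congr ?_
  filter_upwards [hf.coeFn_toLp, hg.coeFn_toLp] with ω h1 h2
  rw [h1, h2]

lemma memL2_integrable_sq {f : Ω → E} (hf : MemLp f 2 P) :
    Integrable (fun ω => ‖f ω‖ ^ 2) P := by
  have h := memL2_integrable_inner hf hf
  refine h.congr (Filter.Eventually.of_forall fun ω => ?_)
  exact real_inner_self_eq_norm_sq _

lemma avg_norm_sq_le {M : ℕ} (hM : 0 < M) (c : Fin M → E) :
    ‖(M:ℝ)⁻¹ • ∑ m, c m‖ ^ 2 ≤ (M:ℝ)⁻¹ * ∑ m, ‖c m‖ ^ 2 := by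
  have hMpos : (0:ℝ) < M := Nat.cast_pos.mpr hM
  have h1 : ‖∑ m, c m‖ ^ 2 ≤ (M:ℝ) * ∑ m, ‖c m‖ ^ 2 := by
    calc ‖∑ m, c m‖ ^ 2 ≤ (∑ m, ‖c m‖) ^ 2 := by
          exact pow_le_pow_left₀ (norm_nonneg _) (norm_sum_le _ _) 2
      _ ≤ (M:ℝ) * ∑ m, ‖c m‖ ^ 2 := by
          simpa using sq_sum_le_card_mul_sum_sq (s := Finset.univ) (f := fun m => ‖c m‖)
  rw [norm_smul, Real.norm_eq_abs, abs_of_nonneg (by positivity), mul_pow]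
  rw [show ((M:ℝ)⁻¹)^2 = (M:ℝ)⁻¹ * (M:ℝ)⁻¹ from sq _]
  calc (M:ℝ)⁻¹ * (M:ℝ)⁻¹ * ‖∑ m, c m‖^2 ≤ (M:ℝ)⁻¹ * (M:ℝ)⁻¹ * ((M:ℝ) * ∑ m, ‖c m‖^2) := by
        apply mul_le_mul_of_nonneg_left h1 (by positivity)
    _ = (M:ℝ)⁻¹ * ∑ m, ‖c m‖ ^ 2 := by field_simp

end Aux

section Grad
variable {d : ℕ} {H lam : ℝ} {F : Euc d → ℝ} {gradF : Euc d → Euc d} {xstar : Euc d}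

lemma grad_sq_le (hH : 0 < H)
    (hsm : ∀ x y, F y - F x - ⟪gradF x, y - x⟫ ≤ H / 2 * ‖y - x‖ ^ 2)
    (hmin : ∀ y, F xstar ≤ F y) :
    ∀ p, ‖gradF p‖^2 ≤ 2*H*(F p - F xstar) := by
  intro p
  have hHi : (0:ℝ) < H⁻¹ := inv_pos.mpr hH
  have h1 := hsm p (p - H⁻¹ • gradF p)
  have h2 := hmin (p - H⁻¹ • gradF p)
  have e1 : p - H⁻¹ • gradF p - p = -(H⁻¹ • gradF p) := by abel
  have e2 : ‖p - H⁻¹ • gradF p - p‖^2 = H⁻¹ * (H⁻¹ * ‖gradF p‖^2) := by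
    rw [e1, norm_neg, norm_smul, Real.norm_eq_abs, abs_of_pos hHi, mul_pow]; ring
  have e3 : ⟪gradF p, p - H⁻¹ • gradF p - p⟫ = -(H⁻¹ * ‖gradF p‖^2) := by
    rw [e1, inner_neg_right, real_inner_smul_right, real_inner_self_eq_norm_sq]
  rw [e2, e3] at h1
  have e8 : H / 2 * (H⁻¹ * (H⁻¹ * ‖gradF p‖^2)) = 1/2 * (H⁻¹ * ‖gradF p‖^2) := by
    field_simp [hH.ne']
  rw [e8] at h1
  have hn : H⁻¹ * ‖gradF p‖^2 ≤ 2*(F p - F xstar) := by linarith [h1, h2]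
  have := mul_le_mul_of_nonneg_left hn hH.le
  rw [← mul_assoc, mul_inv_cancel₀ hH.ne', one_mul] at this
  linarith [this]

lemma grad_bregman (hH : 0 < H) (hlam : 0 ≤ lam)
    (hsc : ∀ x y, lam / 2 * ‖y - x‖ ^ 2 ≤ F y - F x - ⟪gradF x, y - x⟫)
    (hsm : ∀ x y, F y - F x - ⟪gradF x, y - x⟫ ≤ H / 2 * ‖y - x‖ ^ 2) :
    ∀ p q, ‖gradF p - gradF q‖^2 ≤ 2*H*(F p - F q - ⟪gradF q, p - q⟫) := by
  intro p q
  have hHi : (0:ℝ) < H⁻¹ := inv_pos.mpr hH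
  set v : Euc d := gradF p - gradF q with hv
  have h1 := hsm p (p - H⁻¹ • v)
  have h2 := hsc q (p - H⁻¹ • v)
  have e1 : p - H⁻¹ • v - p = -(H⁻¹ • v) := by abel
  have e2 : ‖p - H⁻¹ • v - p‖^2 = H⁻¹ * (H⁻¹ * ‖v‖^2) := by
    rw [e1, norm_neg, norm_smul, Real.norm_eq_abs, abs_of_pos hHi, mul_pow]; ring
  have e3 : ⟪gradF p, p - H⁻¹ • v - p⟫ = -(H⁻¹ * ⟪gradF p, v⟫) := by
    rw [e1, inner_neg_right, real_inner_smul_right]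
  have e4 : p - H⁻¹ • v - q = (p - q) - H⁻¹ • v := by abel
  have e5 : ⟪gradF q, p - H⁻¹ • v - q⟫ = ⟪gradF q, p - q⟫ - H⁻¹ * ⟪gradF q, v⟫ := by
    rw [e4, inner_sub_right, real_inner_smul_right]
  have e6 : H⁻¹ * ⟪gradF p, v⟫ - H⁻¹ * ⟪gradF q, v⟫ = H⁻¹ * ‖v‖^2 := by
    rw [← mul_sub, ← inner_sub_left, ← hv, real_inner_self_eq_norm_sq]
  have e7 : 0 ≤ lam / 2 * ‖p - H⁻¹ • v - q‖^2 :=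
    mul_nonneg (by linarith) (sq_nonneg _)
  rw [e2, e3] at h1
  rw [e5] at h2
  have e8 : H / 2 * (H⁻¹ * (H⁻¹ * ‖v‖^2)) = 1/2 * (H⁻¹ * ‖v‖^2) := by
    field_simp [hH.ne']
  rw [e8] at h1
  have hn : H⁻¹ * ‖v‖^2 ≤ 2*(F p - F q - ⟪gradF q, p - q⟫) := by linarith [h1, h2, e6, e7]
  have := mul_le_mul_of_nonneg_left hn hH.le
  rw [← mul_assoc, mul_inv_cancel₀ hH.ne', one_mul] at this
  linarith [this]

lemma grad_lip (hH : 0 < H) (hlam : 0 ≤ lam)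
    (hsc : ∀ x y, lam / 2 * ‖y - x‖ ^ 2 ≤ F y - F x - ⟪gradF x, y - x⟫)
    (hsm : ∀ x y, F y - F x - ⟪gradF x, y - x⟫ ≤ H / 2 * ‖y - x‖ ^ 2) :
    ∀ p q : Euc d, ‖gradF p - gradF q‖ ≤ H * ‖p - q‖ := by
  intro p q
  have h := grad_bregman hH hlam hsc hsm p q
  have h2 := hsm q p
  have hsq : ‖gradF p - gradF q‖^2 ≤ (H*‖p-q‖)^2 := by nlinarith [h, h2, hH]
  have := Real.sqrt_le_sqrt hsq
  rwa [Real.sqrt_sq (norm_nonneg _), Real.sqrt_sq (by positivity)] at this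

lemma grad_cont (hH : 0 < H) (hlam : 0 ≤ lam)
    (hsc : ∀ x y, lam / 2 * ‖y - x‖ ^ 2 ≤ F y - F x - ⟪gradF x, y - x⟫)
    (hsm : ∀ x y, F y - F x - ⟪gradF x, y - x⟫ ≤ H / 2 * ‖y - x‖ ^ 2) :
    Continuous gradF := by
  have : LipschitzWith (Real.toNNReal H) gradF := by
    apply LipschitzWith.of_dist_le_mul
    intro p q
    rw [dist_eq_norm, dist_eq_norm, Real.coe_toNNReal H hH.le]
    exact grad_lip hH hlam hsc hsm p q
  exact this.continuous

end Grad

lemma det_core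
    {d : ℕ} {H lam : ℝ} (hH : 0 < H) (hlam : 0 ≤ lam)
    {F : Euc d → ℝ} {gradF : Euc d → Euc d} {xstar : Euc d}
    (hsc : ∀ x y, lam / 2 * ‖y - x‖ ^ 2 ≤ F y - F x - ⟪gradF x, y - x⟫)
    (hsm : ∀ x y, F y - F x - ⟪gradF x, y - x⟫ ≤ H / 2 * ‖y - x‖ ^ 2)
    (hmin : ∀ y, F xstar ≤ F y)
    (gf2 : ∀ p, ‖gradF p‖^2 ≤ 2*H*(F p - F xstar))
    {M : ℕ} (hM : 1 ≤ M) {e : ℝ} (he : 0 < e) (heH : e * H ≤ 1/4)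
    (a : Fin M → Euc d) (b h : Euc d)
    (hb : b = (M:ℝ)⁻¹ • ∑ m, a m) (hh : h = (M:ℝ)⁻¹ • ∑ m, gradF (a m)) :
    ‖b - xstar - e • h‖^2
      ≤ (1 - lam * e) * ‖b - xstar‖^2 - e * (F b - F xstar)
        + 2 * e * H * ((M:ℝ)⁻¹ * ∑ m, ‖b - a m‖^2) := by
  have hMpos : (0:ℝ) < M := Nat.cast_pos.mpr hM
  have hMne : (M:ℝ) ≠ 0 := hMpos.ne'
  have hsumM : (M:ℝ) • b = ∑ m, a m := by
    rw [hb, smul_smul, mul_inv_cancel₀ hMne, one_smul]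
  have hsumb : ∑ m : Fin M, (a m - b) = 0 := by
    rw [Finset.sum_sub_distrib, Finset.sum_const, Finset.card_univ, Fintype.card_fin,
      ← Nat.cast_smul_eq_nsmul ℝ, hsumM, sub_self]
  have hbx : b - xstar = (M:ℝ)⁻¹ • ∑ m : Fin M, (a m - xstar) := by
    rw [Finset.sum_sub_distrib, Finset.sum_const, Finset.card_univ, Fintype.card_fin,
      ← Nat.cast_smul_eq_nsmul ℝ, smul_sub, smul_smul, inv_mul_cancel₀ hMne, one_smul, hb]
  have hgap0 : 0 ≤ F b - F xstar := sub_nonneg.mpr (hmin b)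
  have hSa0 : 0 ≤ (M:ℝ)⁻¹ * ∑ m, ‖b - a m‖^2 :=
    mul_nonneg (inv_nonneg.mpr hMpos.le) (Finset.sum_nonneg fun m _ => sq_nonneg _)
  have fT : ‖b - xstar‖^2 ≤ (M:ℝ)⁻¹ * ∑ m, ‖a m - xstar‖^2 := by
    rw [hbx]; exact avg_norm_sq_le hM _
  have f3 : ∀ m : Fin M, (F b - F xstar) + lam/2 * ‖a m - xstar‖^2 - H/2 * ‖b - a m‖^2
      ≤ ⟪gradF (a m), b - xstar⟫ := by
    intro m
    have h1 := hsm (a m) b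
    have h2 := hsc (a m) xstar
    have e1 : ⟪gradF (a m), b - xstar⟫
        = ⟪gradF (a m), b - a m⟫ - ⟪gradF (a m), xstar - a m⟫ := by
      rw [← inner_sub_right]; congr 1; abel
    rw [norm_sub_rev] at h2
    linarith [h1, h2, e1.le, e1.ge]
  have f2 : ⟪h, b - xstar⟫ = (M:ℝ)⁻¹ * ∑ m, ⟪gradF (a m), b - xstar⟫ := by
    rw [hh, real_inner_smul_left, sum_inner]
  have fP1 : (F b - F xstar) + lam/2 * ((M:ℝ)⁻¹ * ∑ m, ‖a m - xstar‖^2)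
      - H/2 * ((M:ℝ)⁻¹ * ∑ m, ‖b - a m‖^2) ≤ ⟪h, b - xstar⟫ := by
    have hs := Finset.sum_le_sum (fun m (_ : m ∈ Finset.univ) => f3 m)
    have hs2 := mul_le_mul_of_nonneg_left hs (inv_nonneg.mpr hMpos.le)
    have expand : (M:ℝ)⁻¹ * ∑ m : Fin M,
        ((F b - F xstar) + lam/2 * ‖a m - xstar‖^2 - H/2 * ‖b - a m‖^2)
        = (F b - F xstar) + lam/2 * ((M:ℝ)⁻¹ * ∑ m, ‖a m - xstar‖^2)
          - H/2 * ((M:ℝ)⁻¹ * ∑ m, ‖b - a m‖^2) := by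
      rw [Finset.sum_sub_distrib, Finset.sum_add_distrib, Finset.sum_const, Finset.card_univ,
        Fintype.card_fin, nsmul_eq_mul, ← Finset.mul_sum, ← Finset.mul_sum]
      field_simp
    rw [f2]
    calc (F b - F xstar) + lam/2 * ((M:ℝ)⁻¹ * ∑ m, ‖a m - xstar‖^2)
          - H/2 * ((M:ℝ)⁻¹ * ∑ m, ‖b - a m‖^2)
        = (M:ℝ)⁻¹ * ∑ m : Fin M,
            ((F b - F xstar) + lam/2 * ‖a m - xstar‖^2 - H/2 * ‖b - a m‖^2) := expand.symm
      _ ≤ (M:ℝ)⁻¹ * ∑ m, ⟪gradF (a m), b - xstar⟫ := hs2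
  have f7 : ∑ m : Fin M, (F (a m) - F b) ≤ H/2 * ∑ m : Fin M, ‖b - a m‖^2 := by
    have h2 : ∑ m : Fin M, ⟪gradF b, a m - b⟫ = 0 := by
      rw [← inner_sum, hsumb, inner_zero_right]
    have key : ∑ m : Fin M, (F (a m) - F b) - ∑ m : Fin M, ⟪gradF b, a m - b⟫
        ≤ H/2 * ∑ m : Fin M, ‖b - a m‖^2 := by
      rw [← Finset.sum_sub_distrib]
      calc ∑ m : Fin M, (F (a m) - F b - ⟪gradF b, a m - b⟫)
          ≤ ∑ m : Fin M, H/2 * ‖a m - b‖^2 :=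
            Finset.sum_le_sum (fun m _ => hsm b (a m))
        _ = H/2 * ∑ m : Fin M, ‖b - a m‖^2 := by
            rw [← Finset.mul_sum]
            congr 1
            exact Finset.sum_congr rfl (fun m _ => by rw [norm_sub_rev])
    linarith [key, h2]
  have fh : ‖h‖^2 ≤ H^2 * ((M:ℝ)⁻¹ * ∑ m, ‖b - a m‖^2) + 2*H*(F b - F xstar) := by
    have f5 : ‖h‖^2 ≤ (M:ℝ)⁻¹ * ∑ m, ‖gradF (a m)‖^2 := by
      rw [hh]; exact avg_norm_sq_le hM _
    have s1 : ∑ m : Fin M, ‖gradF (a m)‖^2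
        ≤ 2*H*(∑ m : Fin M, (F (a m) - F b)) + (M:ℝ)*(2*H*(F b - F xstar)) := by
      calc ∑ m : Fin M, ‖gradF (a m)‖^2
          ≤ ∑ m : Fin M, 2*H*((F (a m) - F b) + (F b - F xstar)) := by
            refine Finset.sum_le_sum (fun m _ => ?_)
            have := gf2 (a m); nlinarith [this]
        _ = 2*H*(∑ m : Fin M, (F (a m) - F b)) + (M:ℝ)*(2*H*(F b - F xstar)) := by
            simp only [mul_add, Finset.sum_add_distrib, Finset.sum_const, Finset.card_univ,
              Fintype.card_fin, nsmul_eq_mul, ← Finset.mul_sum]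
            try ring
    have s2 : 2*H*(∑ m : Fin M, (F (a m) - F b)) ≤ 2*H*(H/2 * ∑ m : Fin M, ‖b - a m‖^2) :=
      mul_le_mul_of_nonneg_left f7 (by positivity)
    have s3 : (M:ℝ)⁻¹ * ∑ m, ‖gradF (a m)‖^2
        ≤ (M:ℝ)⁻¹ * (2*H*(H/2 * ∑ m : Fin M, ‖b - a m‖^2) + (M:ℝ)*(2*H*(F b - F xstar))) := by
      apply mul_le_mul_of_nonneg_left _ (inv_nonneg.mpr hMpos.le)
      linarith [s1, s2]
    have s4 : (M:ℝ)⁻¹ * (2*H*(H/2 * ∑ m : Fin M, ‖b - a m‖^2) + (M:ℝ)*(2*H*(F b - F xstar)))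
        = H^2 * ((M:ℝ)⁻¹ * ∑ m, ‖b - a m‖^2) + 2*H*(F b - F xstar) := by
      field_simp
    linarith [f5, s3, s4.le, s4.ge]
  have f1 : ‖b - xstar - e • h‖^2
      = ‖b - xstar‖^2 - 2*e*⟪h, b - xstar⟫ + e^2*‖h‖^2 := by
    rw [norm_sub_sq_real (b - xstar) (e • h), real_inner_smul_right, norm_smul,
      Real.norm_eq_abs, mul_pow, sq_abs, real_inner_comm]
    ring
  have p1 := mul_le_mul_of_nonneg_left fP1 he.le
  have p2 := mul_le_mul_of_nonneg_left fh (sq_nonneg e)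
  have q1 : 0 ≤ e * H := by positivity
  have q2 : (e*H)^2 ≤ (1/4)*(e*H) := by nlinarith [heH, q1]
  have p3 : e^2*(H^2*((M:ℝ)⁻¹ * ∑ m, ‖b - a m‖^2)) ≤ (1/4)*(e*H)*((M:ℝ)⁻¹ * ∑ m, ‖b - a m‖^2) := by
    nlinarith [q2, hSa0]
  have q3 : 0 ≤ e * (F b - F xstar) := mul_nonneg he.le hgap0
  have p4 : e^2*(2*H*(F b - F xstar)) ≤ 1/2*(e*(F b - F xstar)) := by nlinarith [heH, q3]
  have p5 := mul_le_mul_of_nonneg_left fT (mul_nonneg hlam he.le)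
  have p7 : 0 ≤ e*H*((M:ℝ)⁻¹ * ∑ m, ‖b - a m‖^2) := mul_nonneg q1 hSa0
  rw [f1]
  nlinarith [p1, p2, p3, p4, p5, q3, p7]

/-- Lemma 3.1 of Stich. If `F` is `H`-smooth and `λ`-strongly convex with
minimizer `x*`, the stochastic gradients have variance at most `σ²`, and `η t ≤ 1/(4H)`, then
the local SGD iterates satisfy
`E[F(x̄ t) − F*] ≤ (2/η t − 2λ) E‖x̄ t − x*‖² − (2/η t) E‖x̄ (t+1) − x*‖² + 2 η t σ²/M
+ (4H/M) ∑ₘ E‖x̄ t − x t m‖²` where `x̄ t = (1/M) ∑ₘ x t m`. -/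
theorem local_sgd_one_step_recursion
    (d : ℕ) (H lam σ : ℝ) (hH : 0 < H) (hlam : 0 ≤ lam)
    (Z : Type) [MeasurableSpace Z] (D : Measure Z) [IsProbabilityMeasure D]
    (f : Euc d → Z → ℝ) (F : Euc d → ℝ) (gradF : Euc d → Euc d)
    (g : Euc d → Z → Euc d) (xstar : Euc d)
    (hF : ∀ x, F x = ∫ z, f x z ∂D)
    (hfgrad : ∀ x z, HasGradientAt (fun y => f y z) (g x z) x)
    (hunb : ∀ x, ∫ z, g x z ∂D = gradF x)
    (hvar : ∀ x, ∫ z, ‖g x z - gradF x‖ ^ 2 ∂D ≤ σ ^ 2)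
    (hFgrad : ∀ x, HasGradientAt F (gradF x) x)
    (hsc : ∀ x y, lam / 2 * ‖y - x‖ ^ 2 ≤ F y - F x - ⟪gradF x, y - x⟫)
    (hsm : ∀ x y, F y - F x - ⟪gradF x, y - x⟫ ≤ H / 2 * ‖y - x‖ ^ 2)
    (hmin : ∀ y, F xstar ≤ F y)
    (M K : ℕ) (hM : 1 ≤ M) (hK : 1 ≤ K)
    (η : ℕ → ℝ) (hηpos : ∀ t, 0 < η t)
    (Ω : Type) [MeasurableSpace Ω] (P : Measure Ω) [IsProbabilityMeasure P]
    (z : ℕ → Fin M → Ω → Z)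
    (hzmeas : ∀ t m, Measurable (z t m))
    (hzlaw : ∀ t m, Measure.map (z t m) P = D)
    (hziid : iIndepFun (fun p : ℕ × Fin M => z p.1 p.2) P)
    (hgmeas : Measurable (Function.uncurry g))
    (x : ℕ → Fin M → Ω → Euc d)
    (hx0 : ∀ m ω, x 0 m ω = 0)
    (hxup : ∀ t m ω, x (t + 1) m ω =
      if (t + 1) % K = 0 then
        (M : ℝ)⁻¹ • ∑ m' : Fin M, (x t m' ω - η t • g (x t m' ω) (z t m' ω))
      else x t m ω - η t • g (x t m ω) (z t m ω))
    (hxL2 : ∀ t m, MemLp (x t m) 2 P)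
    (hgL2 : ∀ t m, MemLp (fun ω => g (x t m ω) (z t m ω)) 2 P)
    (hFint : ∀ t m, Integrable (fun ω => F (x t m ω)) P)
    (hFbarint : ∀ t, Integrable (fun ω => F ((M : ℝ)⁻¹ • ∑ m : Fin M, x t m ω)) P) :
    ∀ t, η t ≤ 1 / (4 * H) →
      ∫ ω, (F ((M : ℝ)⁻¹ • ∑ m : Fin M, x t m ω) - F xstar) ∂P
        ≤ (2 / η t - 2 * lam) * ∫ ω, ‖(M : ℝ)⁻¹ • ∑ m : Fin M, x t m ω - xstar‖ ^ 2 ∂P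
          - (2 / η t) * ∫ ω, ‖(M : ℝ)⁻¹ • ∑ m : Fin M, x (t + 1) m ω - xstar‖ ^ 2 ∂P
          + 2 * η t * σ ^ 2 / M
          + (4 * H / M) * ∑ m : Fin M,
              ∫ ω, ‖(M : ℝ)⁻¹ • ∑ m' : Fin M, x t m' ω - x t m ω‖ ^ 2 ∂P := by
  classical
  intro t hη
  have hMpos : (0:ℝ) < M := Nat.cast_pos.mpr hM
  have hMne : (M:ℝ) ≠ 0 := hMpos.ne'
  have he : 0 < η t := hηpos t
  have heH : η t * H ≤ 1/4 := by
    have h4 : (0:ℝ) < 4 * H := by positivity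
    have := mul_le_mul_of_nonneg_right hη hH.le
    rw [div_mul_eq_mul_div, one_mul] at this
    calc η t * H ≤ H / (4 * H) := this
      _ = 1/4 := by field_simp
  -- gradient facts
  have gf2 := grad_sq_le hH hsm hmin
  have gcont := grad_cont hH hlam hsc hsm
  have glip := grad_lip hH hlam hsc hsm
  have gstar : gradF xstar = 0 := by
    have h0 : ‖gradF xstar‖^2 ≤ 0 := by simpa using gf2 xstar
    have h1 : ‖gradF xstar‖ ≤ 0 := by nlinarith [norm_nonneg (gradF xstar), h0]
    exact norm_le_zero_iff.mp h1
  -- measurability of the iterates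
  have hxmeas : ∀ s m, Measurable (x s m) := by
    intro s
    induction s with
    | zero =>
      intro m
      have : x 0 m = fun _ => (0 : Euc d) := funext (hx0 m)
      rw [this]; exact measurable_const
    | succ s ih =>
      intro m
      have hrep : x (s+1) m = fun ω => if (s + 1) % K = 0 then
          (M : ℝ)⁻¹ • ∑ m' : Fin M, (x s m' ω - η s • g (x s m' ω) (z s m' ω))
        else x s m ω - η s • g (x s m ω) (z s m ω) := funext (hxup s m)
      rw [hrep]
      have hgm : ∀ m', Measurable (fun ω => g (x s m' ω) (z s m' ω)) :=
        fun m' => hgmeas.comp ((ih m').prodMk (hzmeas s m'))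
      split_ifs with hc
      · exact (Finset.measurable_sum _ fun m' _ =>
          (ih m').sub ((hgm m').const_smul (η s))).const_smul ((M:ℝ)⁻¹)
      · exact (ih m).sub ((hgm m).const_smul (η s))
  -- L² facts
  have hbarL2 : MemLp (fun ω => (M:ℝ)⁻¹ • ∑ m : Fin M, x t m ω) 2 P :=
    (memLp_finset_sum Finset.univ (fun m _ => hxL2 t m)).const_smul ((M:ℝ)⁻¹)
  have hRL2 : ∀ m, MemLp (fun ω => gradF (x t m ω)) 2 P := by
    intro m
    have hsub : MemLp (fun ω => x t m ω - xstar) 2 P := (hxL2 t m).sub (memLp_const xstar)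
    refine MemLp.of_le_mul (c := H) hsub
      ((gcont.measurable.comp (hxmeas t m)).aestronglyMeasurable) ?_
    refine Filter.Eventually.of_forall fun ω => ?_
    have h1 := glip (x t m ω) xstar
    rw [gstar, sub_zero] at h1
    exact h1
  have hδL2 : ∀ m, MemLp (fun ω => g (x t m ω) (z t m ω) - gradF (x t m ω)) 2 P :=
    fun m => (hgL2 t m).sub (hRL2 m)
  have hhbarL2 : MemLp (fun ω => (M:ℝ)⁻¹ • ∑ m : Fin M, gradF (x t m ω)) 2 P :=
    (memLp_finset_sum Finset.univ (fun m _ => hRL2 m)).const_smul ((M:ℝ)⁻¹)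
  have hWL2 : MemLp (fun ω => ((M:ℝ)⁻¹ • ∑ m : Fin M, x t m ω) - xstar
      - η t • ((M:ℝ)⁻¹ • ∑ m : Fin M, gradF (x t m ω))) 2 P :=
    (hbarL2.sub (memLp_const xstar)).sub (hhbarL2.const_smul (η t))
  have hΔL2 : MemLp (fun ω => (M:ℝ)⁻¹ • ∑ m : Fin M,
      (g (x t m ω) (z t m ω) - gradF (x t m ω))) 2 P :=
    (memLp_finset_sum Finset.univ (fun m _ => hδL2 m)).const_smul ((M:ℝ)⁻¹)
  -- factorization through the past
  set S : Finset (ℕ × Fin M) := Finset.range t ×ˢ Finset.univ with hS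
  set Past : Ω → (↥S → Z) := fun ω i => z i.1.1 i.1.2 ω with hPast
  have hPastMeas : Measurable Past := measurable_pi_lambda _ fun i => hzmeas _ _
  have hfac : ∀ s, s ≤ t → ∀ m, ∃ φ : (↥S → Z) → Euc d,
      Measurable φ ∧ ∀ ω, x s m ω = φ (Past ω) := by
    intro s
    induction s with
    | zero => exact fun _ m => ⟨fun _ => 0, measurable_const, fun ω => hx0 m ω⟩
    | succ s ih =>
      intro hs m
      have hst : s < t := lt_of_lt_of_le (Nat.lt_succ_self s) hs
      have hmem : ∀ m' : Fin M, ((s, m') : ℕ × Fin M) ∈ S := fun m' => by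
        rw [hS]; exact Finset.mem_product.2 ⟨Finset.mem_range.2 hst, Finset.mem_univ _⟩
      choose φ hφm hφe using ih hst.le
      refine ⟨fun v => if (s+1) % K = 0 then
          (M:ℝ)⁻¹ • ∑ m' : Fin M, (φ m' v - η s • g (φ m' v) (v ⟨(s,m'), hmem m'⟩))
        else φ m v - η s • g (φ m v) (v ⟨(s,m), hmem m⟩), ?_, ?_⟩
      · have hgm : ∀ m', Measurable (fun v : (↥S → Z) => g (φ m' v) (v ⟨(s,m'), hmem m'⟩)) :=
          fun m' => hgmeas.comp ((hφm m').prodMk (measurable_pi_apply _))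
        split_ifs with hc
        · exact (Finset.measurable_sum _ fun m' _ =>
            (hφm m').sub ((hgm m').const_smul (η s))).const_smul ((M:ℝ)⁻¹)
        · exact (hφm m).sub ((hgm m).const_smul (η s))
      · intro ω
        rw [hxup s m ω]
        split_ifs with hc
        · congr 1
          refine Finset.sum_congr rfl fun m' _ => ?_
          rw [hφe m' ω]
        · rw [hφe m ω]
  choose ξ hξmeas hξeq using hfac t le_rfl
  -- independence
  have hdisj1 : ∀ m : Fin M, Disjoint S ({(t,m)} : Finset (ℕ × Fin M)) := by
    intro m
    rw [Finset.disjoint_singleton_right, hS]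
    simp [Finset.mem_product]
  have hind1 : ∀ m, IndepFun Past (z t m) P := by
    intro m
    have base := hziid.indepFun_finset S {(t,m)} (hdisj1 m) (fun p => hzmeas p.1 p.2)
    exact base.comp measurable_id
      (measurable_pi_apply (⟨(t,m), Finset.mem_singleton_self _⟩ :
        ↥({(t,m)} : Finset (ℕ × Fin M))))
  have hind2 : ∀ m m', m ≠ m' →
      IndepFun (fun ω => (Past ω, z t m ω)) (z t m') P := by
    intro m m' hmm
    have hdisj : Disjoint (insert ((t,m) : ℕ × Fin M) S) {(t,m')} := by
      rw [Finset.disjoint_singleton_right, Finset.mem_insert]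
      push_neg
      constructor
      · intro hcontra
        exact hmm ((Prod.ext_iff.1 hcontra).2.symm)
      · rw [hS]; simp [Finset.mem_product]
    have base := hziid.indepFun_finset (insert ((t,m) : ℕ × Fin M) S) {(t,m')} hdisj
      (fun p => hzmeas p.1 p.2)
    have hθ : Measurable (fun v : (↥(insert ((t,m) : ℕ × Fin M) S) → Z) =>
        ((fun i : ↥S => v ⟨i.1, Finset.mem_insert_of_mem i.2⟩,
          v ⟨(t,m), Finset.mem_insert_self _ _⟩) : (↥S → Z) × Z)) :=
      (measurable_pi_lambda _ fun i => measurable_pi_apply _).prodMk (measurable_pi_apply _)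
    exact base.comp hθ
      (measurable_pi_apply (⟨(t,m'), Finset.mem_singleton_self _⟩ :
        ↥({(t,m')} : Finset (ℕ × Fin M))))
  set μ : Measure (↥S → Z) := P.map Past with hμ
  haveI hμprob : IsProbabilityMeasure μ := Measure.isProbabilityMeasure_map hPastMeas.aemeasurable
  have hmap1 : ∀ m, P.map (fun ω => (Past ω, z t m ω)) = μ.prod D := by
    intro m
    rw [(indepFun_iff_map_prod_eq_prod_map_map hPastMeas.aemeasurable
      (hzmeas t m).aemeasurable).1 (hind1 m), hzlaw t m]
  have hmap2 : ∀ m m', m ≠ m' →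
      P.map (fun ω => ((Past ω, z t m ω), z t m' ω)) = (μ.prod D).prod D := by
    intro m m' hmm
    rw [(indepFun_iff_map_prod_eq_prod_map_map
      ((hPastMeas.prodMk (hzmeas t m)).aemeasurable) (hzmeas t m').aemeasurable).1
      (hind2 m m' hmm), hmap1 m, hzlaw t m']
  -- measurable pieces on the factor space
  have hδfacmeas : ∀ m, Measurable (fun q : (↥S → Z) × Z =>
      g (ξ m q.1) q.2 - gradF (ξ m q.1)) := fun m =>
    (hgmeas.comp (((hξmeas m).comp measurable_fst).prodMk measurable_snd)).sub
      (gcont.measurable.comp ((hξmeas m).comp measurable_fst))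
  have hδcomp : ∀ m ω, g (x t m ω) (z t m ω) - gradF (x t m ω)
      = (fun q : (↥S → Z) × Z => g (ξ m q.1) q.2 - gradF (ξ m q.1)) (Past ω, z t m ω) := by
    intro m ω
    simp only [hξeq m ω]
  -- a.e. integrability and zero mean of the noise on sections
  have hδprodint : ∀ m, Integrable (fun q : (↥S → Z) × Z =>
      g (ξ m q.1) q.2 - gradF (ξ m q.1)) (μ.prod D) := by
    intro m
    rw [← hmap1 m, integrable_map_measure (hδfacmeas m).aestronglyMeasurable
      (hPastMeas.prodMk (hzmeas t m)).aemeasurable]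
    exact ((hδL2 m).integrable one_le_two).congr
      (Filter.Eventually.of_forall fun ω => hδcomp m ω)
  have hδint : ∀ m, ∀ᵐ p ∂μ, Integrable (fun zz => g (ξ m p) zz - gradF (ξ m p)) D :=
    fun m => (hδprodint m).prod_right_ae
  have hδzero : ∀ m, ∀ᵐ p ∂μ, ∫ zz, (g (ξ m p) zz - gradF (ξ m p)) ∂D = 0 := by
    intro m
    filter_upwards [hδint m] with p hp
    have hgint : Integrable (fun zz => g (ξ m p) zz) D := by
      have h2 := hp.add (integrable_const (gradF (ξ m p)))
      refine h2.congr (Filter.Eventually.of_forall fun zz => ?_)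
      simp
    rw [integral_sub hgint (integrable_const _), hunb (ξ m p), integral_const]
    simp [measure_univ]
  -- the W function on the factor space
  set wfun : (↥S → Z) → Euc d := fun p => ((M:ℝ)⁻¹ • ∑ m' : Fin M, ξ m' p) - xstar
      - η t • ((M:ℝ)⁻¹ • ∑ m' : Fin M, gradF (ξ m' p)) with hwfun
  have hwmeas : Measurable wfun := by
    apply Measurable.sub
    · exact ((Finset.measurable_sum Finset.univ fun m' _ => hξmeas m').const_smul ((M:ℝ)⁻¹)).sub (measurable_const (a := xstar))
    · exact ((Finset.measurable_sum Finset.univ fun m' _ =>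
        gcont.measurable.comp (hξmeas m')).const_smul ((M:ℝ)⁻¹)).const_smul (η t)
  have hWfac : ∀ ω, ((M:ℝ)⁻¹ • ∑ m : Fin M, x t m ω) - xstar
      - η t • ((M:ℝ)⁻¹ • ∑ m : Fin M, gradF (x t m ω)) = wfun (Past ω) := by
    intro ω
    simp only [hwfun, hξeq]
  have hWpastL2 : MemLp (fun ω => wfun (Past ω)) 2 P :=
    hWL2.ae_eq (Filter.Eventually.of_forall fun ω => hWfac ω)
  -- Claim A : E⟪W, δ m⟫ = 0
  have claimA : ∀ m, (∫ ω, ⟪wfun (Past ω),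
      g (x t m ω) (z t m ω) - gradF (x t m ω)⟫ ∂P) = 0 := by
    intro m
    have hΘmeas : Measurable (fun q : (↥S → Z) × Z =>
        ⟪wfun q.1, g (ξ m q.1) q.2 - gradF (ξ m q.1)⟫) :=
      (hwmeas.comp measurable_fst).inner (hδfacmeas m)
    have hpair : AEMeasurable (fun ω => (Past ω, z t m ω)) P :=
      (hPastMeas.prodMk (hzmeas t m)).aemeasurable
    have hcompθ : ∀ ω, ⟪wfun (Past ω), g (x t m ω) (z t m ω) - gradF (x t m ω)⟫
        = (fun q : (↥S → Z) × Z => ⟪wfun q.1, g (ξ m q.1) q.2 - gradF (ξ m q.1)⟫)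
            (Past ω, z t m ω) := by
      intro ω
      simp only [hξeq m ω]
    have hΘint : Integrable (fun q : (↥S → Z) × Z =>
        ⟪wfun q.1, g (ξ m q.1) q.2 - gradF (ξ m q.1)⟫) (μ.prod D) := by
      rw [← hmap1 m, integrable_map_measure hΘmeas.aestronglyMeasurable hpair]
      exact (memL2_integrable_inner hWpastL2 (hδL2 m)).congr
        (Filter.Eventually.of_forall fun ω => hcompθ ω)
    have h1 : ∫ q, (fun q : (↥S → Z) × Z =>
        ⟪wfun q.1, g (ξ m q.1) q.2 - gradF (ξ m q.1)⟫) q ∂(μ.prod D)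
        = ∫ ω, ⟪wfun (Past ω), g (x t m ω) (z t m ω) - gradF (x t m ω)⟫ ∂P := by
      rw [← hmap1 m, integral_map hpair hΘmeas.aestronglyMeasurable]
      exact integral_congr_ae (Filter.Eventually.of_forall fun ω => (hcompθ ω).symm)
    rw [← h1, integral_prod _ hΘint]
    have h2 : ∀ᵐ p ∂μ, (∫ zz, ⟪wfun p, g (ξ m p) zz - gradF (ξ m p)⟫ ∂D) = 0 := by
      filter_upwards [hδint m, hδzero m] with p hp1 hp2
      rw [integral_inner hp1 (wfun p), hp2, inner_zero_right]
    rw [integral_congr_ae h2, integral_zero]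
  -- Claim B diagonal : E‖δ m‖² ≤ σ²
  have claimBdiag : ∀ m, (∫ ω, ‖g (x t m ω) (z t m ω) - gradF (x t m ω)‖^2 ∂P) ≤ σ^2 := by
    intro m
    have hΘmeas : Measurable (fun q : (↥S → Z) × Z =>
        ‖g (ξ m q.1) q.2 - gradF (ξ m q.1)‖^2) := ((hδfacmeas m).norm).pow_const 2
    have hpair : AEMeasurable (fun ω => (Past ω, z t m ω)) P :=
      (hPastMeas.prodMk (hzmeas t m)).aemeasurable
    have hcompθ : ∀ ω, ‖g (x t m ω) (z t m ω) - gradF (x t m ω)‖^2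
        = (fun q : (↥S → Z) × Z => ‖g (ξ m q.1) q.2 - gradF (ξ m q.1)‖^2)
            (Past ω, z t m ω) := by
      intro ω
      simp only [hξeq m ω]
    have hΘint : Integrable (fun q : (↥S → Z) × Z =>
        ‖g (ξ m q.1) q.2 - gradF (ξ m q.1)‖^2) (μ.prod D) := by
      rw [← hmap1 m, integrable_map_measure hΘmeas.aestronglyMeasurable hpair]
      exact (memL2_integrable_sq (hδL2 m)).congr
        (Filter.Eventually.of_forall fun ω => hcompθ ω)
    have h1 : ∫ q, (fun q : (↥S → Z) × Z =>
        ‖g (ξ m q.1) q.2 - gradF (ξ m q.1)‖^2) q ∂(μ.prod D)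
        = ∫ ω, ‖g (x t m ω) (z t m ω) - gradF (x t m ω)‖^2 ∂P := by
      rw [← hmap1 m, integral_map hpair hΘmeas.aestronglyMeasurable]
      exact integral_congr_ae (Filter.Eventually.of_forall fun ω => (hcompθ ω).symm)
    rw [← h1, integral_prod _ hΘint]
    calc ∫ p, (∫ zz, ‖g (ξ m p) zz - gradF (ξ m p)‖^2 ∂D) ∂μ
        ≤ ∫ _, σ^2 ∂μ := by
          refine integral_mono hΘint.integral_prod_left (integrable_const _) ?_
          intro p
          exact hvar (ξ m p)
      _ = σ^2 := by simp [measure_univ]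
  -- Claim B cross : E⟪δ m, δ m'⟫ = 0 for m ≠ m'
  have claimBcross : ∀ m m', m ≠ m' → (∫ ω, ⟪g (x t m ω) (z t m ω) - gradF (x t m ω),
      g (x t m' ω) (z t m' ω) - gradF (x t m' ω)⟫ ∂P) = 0 := by
    intro m m' hmm
    have hΘmeas : Measurable (fun q : ((↥S → Z) × Z) × Z =>
        ⟪g (ξ m q.1.1) q.1.2 - gradF (ξ m q.1.1),
          g (ξ m' q.1.1) q.2 - gradF (ξ m' q.1.1)⟫) := by
      have h1 : Measurable (fun q : ((↥S → Z) × Z) × Z =>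
          g (ξ m q.1.1) q.1.2 - gradF (ξ m q.1.1)) :=
        (hgmeas.comp (((hξmeas m).comp (measurable_fst.comp measurable_fst)).prodMk
          (measurable_snd.comp measurable_fst))).sub
          (gcont.measurable.comp ((hξmeas m).comp (measurable_fst.comp measurable_fst)))
      have h2 : Measurable (fun q : ((↥S → Z) × Z) × Z =>
          g (ξ m' q.1.1) q.2 - gradF (ξ m' q.1.1)) :=
        (hgmeas.comp (((hξmeas m').comp (measurable_fst.comp measurable_fst)).prodMk
          measurable_snd)).sub
          (gcont.measurable.comp ((hξmeas m').comp (measurable_fst.comp measurable_fst)))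
      exact h1.inner h2
    have hpair : AEMeasurable (fun ω => ((Past ω, z t m ω), z t m' ω)) P :=
      ((hPastMeas.prodMk (hzmeas t m)).prodMk (hzmeas t m')).aemeasurable
    have hcompθ : ∀ ω, ⟪g (x t m ω) (z t m ω) - gradF (x t m ω),
        g (x t m' ω) (z t m' ω) - gradF (x t m' ω)⟫
        = (fun q : ((↥S → Z) × Z) × Z =>
            ⟪g (ξ m q.1.1) q.1.2 - gradF (ξ m q.1.1),
              g (ξ m' q.1.1) q.2 - gradF (ξ m' q.1.1)⟫) ((Past ω, z t m ω), z t m' ω) := by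
      intro ω
      simp only [hξeq m ω, hξeq m' ω]
    have hΘint : Integrable (fun q : ((↥S → Z) × Z) × Z =>
        ⟪g (ξ m q.1.1) q.1.2 - gradF (ξ m q.1.1),
          g (ξ m' q.1.1) q.2 - gradF (ξ m' q.1.1)⟫) ((μ.prod D).prod D) := by
      rw [← hmap2 m m' hmm, integrable_map_measure hΘmeas.aestronglyMeasurable hpair]
      exact (memL2_integrable_inner (hδL2 m) (hδL2 m')).congr
        (Filter.Eventually.of_forall fun ω => hcompθ ω)
    have h1 : ∫ q, (fun q : ((↥S → Z) × Z) × Z =>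
        ⟪g (ξ m q.1.1) q.1.2 - gradF (ξ m q.1.1),
          g (ξ m' q.1.1) q.2 - gradF (ξ m' q.1.1)⟫) q ∂((μ.prod D).prod D)
        = ∫ ω, ⟪g (x t m ω) (z t m ω) - gradF (x t m ω),
            g (x t m' ω) (z t m' ω) - gradF (x t m' ω)⟫ ∂P := by
      rw [← hmap2 m m' hmm, integral_map hpair hΘmeas.aestronglyMeasurable]
      exact integral_congr_ae (Filter.Eventually.of_forall fun ω => (hcompθ ω).symm)
    rw [← h1, integral_prod _ hΘint]
    have hfst : (μ.prod D).map Prod.fst = μ := by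
      rw [Measure.map_fst_prod, measure_univ, one_smul]
    have hlift1 : ∀ᵐ q ∂(μ.prod D), Integrable (fun zz => g (ξ m' q.1) zz - gradF (ξ m' q.1)) D :=
      ae_of_ae_map (measurable_fst.aemeasurable (μ := μ.prod D))
        (p := fun p => Integrable (fun zz => g (ξ m' p) zz - gradF (ξ m' p)) D)
        (by rw [hfst]; exact hδint m')
    have hlift2 : ∀ᵐ q ∂(μ.prod D), ∫ zz, (g (ξ m' q.1) zz - gradF (ξ m' q.1)) ∂D = 0 :=
      ae_of_ae_map (measurable_fst.aemeasurable (μ := μ.prod D))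
        (p := fun p => ∫ zz, (g (ξ m' p) zz - gradF (ξ m' p)) ∂D = 0)
        (by rw [hfst]; exact hδzero m')
    have h2 : ∀ᵐ q ∂(μ.prod D), (∫ zz, ⟪g (ξ m q.1) q.2 - gradF (ξ m q.1),
        g (ξ m' q.1) zz - gradF (ξ m' q.1)⟫ ∂D) = 0 := by
      filter_upwards [hlift1, hlift2] with q hq1 hq2
      rw [integral_inner hq1, hq2, inner_zero_right]
    rw [integral_congr_ae h2, integral_zero]
  -- abbreviations for the averaged process
  obtain ⟨W, hWdef⟩ : ∃ W : Ω → Euc d, W = fun ω => ((M:ℝ)⁻¹ • ∑ m : Fin M, x t m ω) - xstar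
      - η t • ((M:ℝ)⁻¹ • ∑ m : Fin M, gradF (x t m ω)) := ⟨_, rfl⟩
  obtain ⟨Dl, hDldef⟩ : ∃ Dl : Ω → Euc d, Dl = fun ω => (M:ℝ)⁻¹ • ∑ m : Fin M,
      (g (x t m ω) (z t m ω) - gradF (x t m ω)) := ⟨_, rfl⟩
  have hWL2' : MemLp W 2 P := by rw [hWdef]; exact hWL2
  have hDlL2' : MemLp Dl 2 P := by rw [hDldef]; exact hΔL2
  have hWwfun : ∀ ω, W ω = wfun (Past ω) := by
    intro ω; rw [hWdef]; exact hWfac ω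
  -- one-step recursion identity for the averaged iterate
  have hbar1 : ∀ ω, ((M:ℝ)⁻¹ • ∑ m : Fin M, x (t+1) m ω) - xstar = W ω - η t • Dl ω := by
    intro ω
    have hsum : ∑ m : Fin M, x (t + 1) m ω
        = ∑ m : Fin M, (x t m ω - η t • g (x t m ω) (z t m ω)) := by
      by_cases hc : (t+1) % K = 0
      · calc ∑ m : Fin M, x (t+1) m ω
            = ∑ _m : Fin M, (M:ℝ)⁻¹ • ∑ m' : Fin M,
                (x t m' ω - η t • g (x t m' ω) (z t m' ω)) :=
              Finset.sum_congr rfl fun m _ => by rw [hxup t m ω, if_pos hc]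
          _ = (M:ℝ) • ((M:ℝ)⁻¹ • ∑ m' : Fin M,
                (x t m' ω - η t • g (x t m' ω) (z t m' ω))) := by
              rw [Finset.sum_const, Finset.card_univ, Fintype.card_fin,
                ← Nat.cast_smul_eq_nsmul ℝ]
          _ = ∑ m' : Fin M, (x t m' ω - η t • g (x t m' ω) (z t m' ω)) := by
              rw [smul_smul, mul_inv_cancel₀ hMne, one_smul]
      · exact Finset.sum_congr rfl fun m _ => by rw [hxup t m ω, if_neg hc]
    rw [hsum, hWdef, hDldef]
    have hgsplit : ∀ m : Fin M, x t m ω - η t • g (x t m ω) (z t m ω)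
        = x t m ω - η t • gradF (x t m ω)
          - η t • (g (x t m ω) (z t m ω) - gradF (x t m ω)) := by
      intro m; rw [smul_sub]; abel
    rw [Finset.sum_congr rfl fun m _ => hgsplit m]
    simp only [Finset.sum_sub_distrib, smul_sub, ← Finset.smul_sum]
    module
  -- expectation of the cross term vanishes
  have hinner0 : ∫ ω, ⟪W ω, Dl ω⟫ ∂P = 0 := by
    have hexp : ∀ ω, ⟪W ω, Dl ω⟫ = (M:ℝ)⁻¹ * ∑ m : Fin M,
        ⟪wfun (Past ω), g (x t m ω) (z t m ω) - gradF (x t m ω)⟫ := by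
      intro ω
      calc ⟪W ω, Dl ω⟫
          = ⟪wfun (Past ω), (M:ℝ)⁻¹ • ∑ m : Fin M,
              (g (x t m ω) (z t m ω) - gradF (x t m ω))⟫ := by rw [hWwfun ω, hDldef]
        _ = (M:ℝ)⁻¹ * ∑ m : Fin M,
              ⟪wfun (Past ω), g (x t m ω) (z t m ω) - gradF (x t m ω)⟫ := by
            rw [real_inner_smul_right, inner_sum]
    calc ∫ ω, ⟪W ω, Dl ω⟫ ∂P
        = ∫ ω, (M:ℝ)⁻¹ * ∑ m : Fin M,
            ⟪wfun (Past ω), g (x t m ω) (z t m ω) - gradF (x t m ω)⟫ ∂P :=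
          integral_congr_ae (Filter.Eventually.of_forall hexp)
      _ = (M:ℝ)⁻¹ * ∑ m : Fin M, ∫ ω,
            ⟪wfun (Past ω), g (x t m ω) (z t m ω) - gradF (x t m ω)⟫ ∂P := by
          rw [integral_const_mul]
          congr 1
          exact integral_finset_sum Finset.univ fun m _ =>
            memL2_integrable_inner hWpastL2 (hδL2 m)
      _ = 0 := by
          rw [Finset.sum_congr rfl fun m _ => claimA m]
          simp
  -- variance bound
  have hvarbound : ∫ ω, ‖Dl ω‖^2 ∂P ≤ σ^2 / M := by
    have hexp : ∀ ω, ‖Dl ω‖^2 = (M:ℝ)⁻¹ * ((M:ℝ)⁻¹ * ∑ m : Fin M, ∑ m' : Fin M,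
        ⟪g (x t m ω) (z t m ω) - gradF (x t m ω),
          g (x t m' ω) (z t m' ω) - gradF (x t m' ω)⟫) := by
      intro ω
      rw [hDldef]
      show ‖(M:ℝ)⁻¹ • ∑ m : Fin M, (g (x t m ω) (z t m ω) - gradF (x t m ω))‖^2 = _
      rw [norm_smul, Real.norm_eq_abs, abs_of_nonneg (inv_nonneg.mpr hMpos.le), mul_pow,
        ← real_inner_self_eq_norm_sq, sum_inner]
      simp_rw [inner_sum]
      ring
    have hint_inner : ∀ m m' : Fin M, Integrable (fun ω =>
        ⟪g (x t m ω) (z t m ω) - gradF (x t m ω),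
          g (x t m' ω) (z t m' ω) - gradF (x t m' ω)⟫) P :=
      fun m m' => memL2_integrable_inner (hδL2 m) (hδL2 m')
    have heq : ∫ ω, ‖Dl ω‖^2 ∂P = (M:ℝ)⁻¹ * ((M:ℝ)⁻¹ * ∑ m : Fin M, ∑ m' : Fin M,
        ∫ ω, ⟪g (x t m ω) (z t m ω) - gradF (x t m ω),
          g (x t m' ω) (z t m' ω) - gradF (x t m' ω)⟫ ∂P) := by
      rw [integral_congr_ae (Filter.Eventually.of_forall hexp), integral_const_mul,
        integral_const_mul,
        integral_finset_sum _ (fun m _ => integrable_finset_sum _ fun m' _ => hint_inner m m')]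
      congr 2
      refine Finset.sum_congr rfl fun m _ => ?_
      exact integral_finset_sum _ fun m' _ => hint_inner m m'
    have hcell : ∀ m m' : Fin M, (∫ ω, ⟪g (x t m ω) (z t m ω) - gradF (x t m ω),
        g (x t m' ω) (z t m' ω) - gradF (x t m' ω)⟫ ∂P) ≤ if m = m' then σ^2 else 0 := by
      intro m m'
      by_cases hmm : m = m'
      · subst hmm
        rw [if_pos rfl]
        have h3 : ∫ ω, ⟪g (x t m ω) (z t m ω) - gradF (x t m ω),
            g (x t m ω) (z t m ω) - gradF (x t m ω)⟫ ∂P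
            = ∫ ω, ‖g (x t m ω) (z t m ω) - gradF (x t m ω)‖^2 ∂P :=
          integral_congr_ae (Filter.Eventually.of_forall fun ω =>
            real_inner_self_eq_norm_sq _)
        rw [h3]; exact claimBdiag m
      · rw [if_neg hmm, claimBcross m m' hmm]
    have hsum_le : ∑ m : Fin M, ∑ m' : Fin M,
        ∫ ω, ⟪g (x t m ω) (z t m ω) - gradF (x t m ω),
          g (x t m' ω) (z t m' ω) - gradF (x t m' ω)⟫ ∂P ≤ (M:ℝ) * σ^2 := by
      calc ∑ m : Fin M, ∑ m' : Fin M, ∫ ω, ⟪g (x t m ω) (z t m ω) - gradF (x t m ω),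
            g (x t m' ω) (z t m' ω) - gradF (x t m' ω)⟫ ∂P
          ≤ ∑ m : Fin M, ∑ m' : Fin M, (if m = m' then σ^2 else 0) :=
            Finset.sum_le_sum fun m _ => Finset.sum_le_sum fun m' _ => hcell m m'
        _ = ∑ _m : Fin M, σ^2 := Finset.sum_congr rfl fun m _ => by simp
        _ = (M:ℝ) * σ^2 := by
            rw [Finset.sum_const, Finset.card_univ, Fintype.card_fin, nsmul_eq_mul]
    rw [heq]
    calc (M:ℝ)⁻¹ * ((M:ℝ)⁻¹ * ∑ m : Fin M, ∑ m' : Fin M,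
          ∫ ω, ⟪g (x t m ω) (z t m ω) - gradF (x t m ω),
            g (x t m' ω) (z t m' ω) - gradF (x t m' ω)⟫ ∂P)
        ≤ (M:ℝ)⁻¹ * ((M:ℝ)⁻¹ * ((M:ℝ) * σ^2)) := by
          apply mul_le_mul_of_nonneg_left _ (inv_nonneg.mpr hMpos.le)
          apply mul_le_mul_of_nonneg_left hsum_le (inv_nonneg.mpr hMpos.le)
      _ = σ^2 / M := by field_simp
  -- pointwise deterministic bound
  have hdet : ∀ ω, ‖W ω‖^2 ≤ (1 - lam * η t) * ‖((M:ℝ)⁻¹ • ∑ m : Fin M, x t m ω) - xstar‖^2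
      - η t * (F ((M:ℝ)⁻¹ • ∑ m : Fin M, x t m ω) - F xstar)
      + 2 * η t * H * ((M:ℝ)⁻¹ * ∑ m : Fin M,
          ‖((M:ℝ)⁻¹ • ∑ m' : Fin M, x t m' ω) - x t m ω‖^2) := by
    intro ω
    rw [hWdef]
    exact det_core hH hlam hsc hsm hmin gf2 hM he heH (fun m => x t m ω) _ _ rfl rfl
  -- integrability of the pieces
  have intA : Integrable (fun ω => ‖((M:ℝ)⁻¹ • ∑ m : Fin M, x t m ω) - xstar‖^2) P :=
    memL2_integrable_sq (hbarL2.sub (memLp_const xstar))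
  have intgap : Integrable (fun ω => F ((M:ℝ)⁻¹ • ∑ m : Fin M, x t m ω) - F xstar) P :=
    (hFbarint t).sub (integrable_const _)
  have intS : ∀ m, Integrable (fun ω =>
      ‖((M:ℝ)⁻¹ • ∑ m' : Fin M, x t m' ω) - x t m ω‖^2) P :=
    fun m => memL2_integrable_sq (hbarL2.sub (hxL2 t m))
  have intW2 : Integrable (fun ω => ‖W ω‖^2) P := memL2_integrable_sq hWL2'
  have intD2 : Integrable (fun ω => ‖Dl ω‖^2) P := memL2_integrable_sq hDlL2'
  have intWD : Integrable (fun ω => ⟪W ω, Dl ω⟫) P := memL2_integrable_inner hWL2' hDlL2'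
  -- integrated deterministic bound
  have hIW : ∫ ω, ‖W ω‖^2 ∂P
      ≤ (1 - lam * η t) * (∫ ω, ‖((M:ℝ)⁻¹ • ∑ m : Fin M, x t m ω) - xstar‖^2 ∂P)
        - η t * (∫ ω, (F ((M:ℝ)⁻¹ • ∑ m : Fin M, x t m ω) - F xstar) ∂P)
        + 2 * η t * H * ((M:ℝ)⁻¹ * ∑ m : Fin M,
            ∫ ω, ‖((M:ℝ)⁻¹ • ∑ m' : Fin M, x t m' ω) - x t m ω‖^2 ∂P) := by
    have h1 : Integrable (fun ω =>
        (1 - lam * η t) * ‖((M:ℝ)⁻¹ • ∑ m : Fin M, x t m ω) - xstar‖^2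
        - η t * (F ((M:ℝ)⁻¹ • ∑ m : Fin M, x t m ω) - F xstar)) P :=
      (intA.const_mul _).sub (intgap.const_mul _)
    have h2 : Integrable (fun ω => 2 * η t * H * ((M:ℝ)⁻¹ * ∑ m : Fin M,
        ‖((M:ℝ)⁻¹ • ∑ m' : Fin M, x t m' ω) - x t m ω‖^2)) P :=
      ((integrable_finset_sum Finset.univ fun m _ => intS m).const_mul
        ((M:ℝ)⁻¹)).const_mul _
    have hrhs_int : Integrable (fun ω =>
        (1 - lam * η t) * ‖((M:ℝ)⁻¹ • ∑ m : Fin M, x t m ω) - xstar‖^2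
        - η t * (F ((M:ℝ)⁻¹ • ∑ m : Fin M, x t m ω) - F xstar)
        + 2 * η t * H * ((M:ℝ)⁻¹ * ∑ m : Fin M,
            ‖((M:ℝ)⁻¹ • ∑ m' : Fin M, x t m' ω) - x t m ω‖^2)) P := h1.add h2
    calc ∫ ω, ‖W ω‖^2 ∂P
        ≤ ∫ ω, ((1 - lam * η t) * ‖((M:ℝ)⁻¹ • ∑ m : Fin M, x t m ω) - xstar‖^2
            - η t * (F ((M:ℝ)⁻¹ • ∑ m : Fin M, x t m ω) - F xstar)
            + 2 * η t * H * ((M:ℝ)⁻¹ * ∑ m : Fin M,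
                ‖((M:ℝ)⁻¹ • ∑ m' : Fin M, x t m' ω) - x t m ω‖^2)) ∂P :=
          integral_mono intW2 hrhs_int hdet
      _ = (1 - lam * η t) * (∫ ω, ‖((M:ℝ)⁻¹ • ∑ m : Fin M, x t m ω) - xstar‖^2 ∂P)
            - η t * (∫ ω, (F ((M:ℝ)⁻¹ • ∑ m : Fin M, x t m ω) - F xstar) ∂P)
            + 2 * η t * H * ((M:ℝ)⁻¹ * ∑ m : Fin M,
                ∫ ω, ‖((M:ℝ)⁻¹ • ∑ m' : Fin M, x t m' ω) - x t m ω‖^2 ∂P) := by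
          rw [integral_add h1 h2,
            integral_sub (intA.const_mul _) (intgap.const_mul _),
            integral_const_mul, integral_const_mul, integral_const_mul, integral_const_mul,
            integral_finset_sum _ fun m _ => intS m]
  -- the one-step expansion, integrated
  have hchain : ∫ ω, ‖((M:ℝ)⁻¹ • ∑ m : Fin M, x (t+1) m ω) - xstar‖^2 ∂P
      = ∫ ω, ‖W ω‖^2 ∂P - 2 * η t * (∫ ω, ⟪W ω, Dl ω⟫ ∂P)
        + (η t)^2 * (∫ ω, ‖Dl ω‖^2 ∂P) := by
    have hsq : ∀ ω, ‖((M:ℝ)⁻¹ • ∑ m : Fin M, x (t+1) m ω) - xstar‖^2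
        = ‖W ω‖^2 - 2 * η t * ⟪W ω, Dl ω⟫ + (η t)^2 * ‖Dl ω‖^2 := by
      intro ω
      rw [hbar1 ω, norm_sub_sq_real, real_inner_smul_right, norm_smul, Real.norm_eq_abs,
        mul_pow, sq_abs]
      ring
    have hc1 : Integrable (fun ω => ‖W ω‖^2 - 2 * η t * ⟪W ω, Dl ω⟫) P :=
      intW2.sub (intWD.const_mul _)
    have hc2 : Integrable (fun ω => (η t)^2 * ‖Dl ω‖^2) P := intD2.const_mul _
    rw [integral_congr_ae (Filter.Eventually.of_forall hsq),
      integral_add hc1 hc2,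
      integral_sub intW2 (intWD.const_mul _), integral_const_mul, integral_const_mul]
  -- final arithmetic
  have hgapnn : 0 ≤ ∫ ω, (F ((M:ℝ)⁻¹ • ∑ m : Fin M, x t m ω) - F xstar) ∂P :=
    integral_nonneg fun ω => sub_nonneg.mpr (hmin _)
  set IA := ∫ ω, ‖(M:ℝ)⁻¹ • ∑ m : Fin M, x t m ω - xstar‖^2 ∂P with hIAdef
  set IB := ∫ ω, ‖(M:ℝ)⁻¹ • ∑ m : Fin M, x (t+1) m ω - xstar‖^2 ∂P with hIBdef
  set Igap := ∫ ω, (F ((M:ℝ)⁻¹ • ∑ m : Fin M, x t m ω) - F xstar) ∂P with hIgapdef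
  set ISm := ∑ m : Fin M, ∫ ω, ‖(M:ℝ)⁻¹ • ∑ m' : Fin M, x t m' ω - x t m ω‖^2 ∂P with hISmdef
  set IW := ∫ ω, ‖W ω‖^2 ∂P with hIWdef
  set ID := ∫ ω, ‖Dl ω‖^2 ∂P with hIDdef
  rw [hinner0] at hchain
  have hIB2 : IB ≤ (1 - lam * η t) * IA - η t * Igap
      + 2 * η t * H * ((M:ℝ)⁻¹ * ISm) + (η t)^2 * (σ^2 / M) := by
    have h5 : (η t)^2 * ID ≤ (η t)^2 * (σ^2 / M) :=
      mul_le_mul_of_nonneg_left hvarbound (sq_nonneg _)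
    rw [hchain]
    linarith [hIW, h5]
  have hstep : η t * Igap ≤ (1 - lam * η t) * IA - IB
      + 2 * η t * H * ((M:ℝ)⁻¹ * ISm) + (η t)^2 * (σ^2 / M) := by linarith [hIB2]
  calc Igap ≤ 2 * Igap := by linarith [hgapnn]
    _ = (2 / η t) * (η t * Igap) := by field_simp
    _ ≤ (2 / η t) * ((1 - lam * η t) * IA - IB
        + 2 * η t * H * ((M:ℝ)⁻¹ * ISm) + (η t)^2 * (σ^2 / M)) :=
      mul_le_mul_of_nonneg_left hstep (by positivity)
    _ = (2 / η t - 2 * lam) * IA - 2 / η t * IB + 2 * η t * σ ^ 2 / ↑M + 4 * H / ↑M * ISm := by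
      field_simp
      ring
end

section
/- Let F : ℝ^d → ℝ be H-smooth and λ-strongly convex, and let 0 < η ≤ 1/H. Then for all x, y ∈ ℝ^d, ‖x − η∇F(x) − y + η∇F(y)‖² ≤ (1 − λη)‖x − y‖². -/
open scoped RealInnerProductSpace

/-!
Strong convexity makes `∇F` strongly monotone, `⟪∇F x - ∇F y, x - y⟫ ≥ λ‖x - y‖²`, and
convexity together with `H`-smoothness makes it cocoercive, `‖∇F x - ∇F y‖² ≤ H⟪∇F x - ∇F y, x - y⟫`.
Expanding `‖(x - y) - η(∇F x - ∇F y)‖²`, cocoercivity and `ηH ≤ 1` absorb the quadratic term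
`η²‖∇F x - ∇F y‖²` into half of the cross term, and strong monotonicity bounds what is left.
-/

section Bregman

variable {E : Type*} [NormedAddCommGroup E] [InnerProductSpace ℝ E]

def bregmanDiv (F : E → ℝ) (gradF : E → E) (x y : E) : ℝ :=
  F y - F x - ⟪gradF x, y - x⟫

variable {F : E → ℝ} {gradF : E → E}

theorem bregmanDiv_add_bregmanDiv_swap (x y : E) :
    bregmanDiv F gradF x y + bregmanDiv F gradF y x = ⟪gradF x - gradF y, x - y⟫ := by
  rw [bregmanDiv, bregmanDiv, inner_sub_left, ← neg_sub x y, inner_neg_right]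
  ring

theorem mul_norm_sub_sq_le_inner_sub {lam : ℝ}
    (hsc : ∀ x y, lam / 2 * ‖y - x‖ ^ 2 ≤ bregmanDiv F gradF x y) (x y : E) :
    lam * ‖x - y‖ ^ 2 ≤ ⟪gradF x - gradF y, x - y⟫ := by
  have hxy := hsc x y
  rw [norm_sub_rev] at hxy
  linarith [hsc y x, bregmanDiv_add_bregmanDiv_swap (F := F) (gradF := gradF) x y]

/-- The test point `y - H⁻¹ (∇F y - ∇F x)` is where the smoothness upper bound around `y` is
minimised; comparing it with the convexity lower bound around `x` gives the estimate. -/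
theorem norm_sub_sq_div_le_bregmanDiv {H : ℝ} (hH : 0 < H)
    (hconv : ∀ x y, 0 ≤ bregmanDiv F gradF x y)
    (hsm : ∀ x y, bregmanDiv F gradF x y ≤ H / 2 * ‖y - x‖ ^ 2) (x y : E) :
    ‖gradF y - gradF x‖ ^ 2 / (2 * H) ≤ bregmanDiv F gradF x y := by
  set g := gradF y - gradF x
  set z := y - H⁻¹ • g
  have hlower := hconv x z
  have hupper := hsm y z
  have hzy : z - y = -(H⁻¹ • g) := by simp [z]
  have hzx : z - x = (y - x) - H⁻¹ • g := by simp only [z]; abel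
  have hg : H⁻¹ * ⟪gradF y, g⟫ - H⁻¹ * ⟪gradF x, g⟫ = 2 * (‖g‖ ^ 2 / (2 * H)) := by
    rw [← mul_sub, ← inner_sub_left, real_inner_self_eq_norm_sq g]
    field_simp
  rw [bregmanDiv, hzx, inner_sub_right _ (y - x), real_inner_smul_right] at hlower
  rw [bregmanDiv, hzy, inner_neg_right, real_inner_smul_right, norm_neg, norm_smul, mul_pow,
    Real.norm_eq_abs, abs_of_pos (inv_pos.mpr hH)] at hupper
  have hscale : H / 2 * (H⁻¹ ^ 2 * ‖g‖ ^ 2) = ‖g‖ ^ 2 / (2 * H) := by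
    field_simp
  rw [bregmanDiv]
  linarith

theorem norm_sub_sq_le_mul_inner_sub {H : ℝ} (hH : 0 < H)
    (hconv : ∀ x y, 0 ≤ bregmanDiv F gradF x y)
    (hsm : ∀ x y, bregmanDiv F gradF x y ≤ H / 2 * ‖y - x‖ ^ 2) (x y : E) :
    ‖gradF x - gradF y‖ ^ 2 ≤ H * ⟪gradF x - gradF y, x - y⟫ := by
  have hxy := norm_sub_sq_div_le_bregmanDiv hH hconv hsm x y
  have hyx := norm_sub_sq_div_le_bregmanDiv hH hconv hsm y x
  rw [norm_sub_rev] at hxy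
  have hsum := bregmanDiv_add_bregmanDiv_swap (F := F) (gradF := gradF) x y
  rw [← div_le_iff₀' hH]
  calc ‖gradF x - gradF y‖ ^ 2 / H
      = ‖gradF x - gradF y‖ ^ 2 / (2 * H) + ‖gradF x - gradF y‖ ^ 2 / (2 * H) := by ring
    _ ≤ ⟪gradF x - gradF y, x - y⟫ := by linarith

end Bregman

theorem norm_sub_smul_sq_le_of_inner_bounds {E : Type*} [NormedAddCommGroup E]
    [InnerProductSpace ℝ E] {u g : E} {lam H η : ℝ}
    (hmono : lam * ‖u‖ ^ 2 ≤ ⟪g, u⟫) (hcoco : ‖g‖ ^ 2 ≤ H * ⟪g, u⟫)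
    (hH : 0 < H) (hη0 : 0 ≤ η) (hη : η ≤ 1 / H) :
    ‖u - η • g‖ ^ 2 ≤ (1 - lam * η) * ‖u‖ ^ 2 := by
  have hηH : η * H ≤ 1 := (le_div_iff₀ hH).mp hη
  have hinner : 0 ≤ ⟪g, u⟫ := nonneg_of_mul_nonneg_right ((sq_nonneg _).trans hcoco) hH
  have hquad : η ^ 2 * ‖g‖ ^ 2 ≤ η * ⟪g, u⟫ :=
    calc η ^ 2 * ‖g‖ ^ 2 ≤ η ^ 2 * (H * ⟪g, u⟫) := by gcongr
      _ = η * H * (η * ⟪g, u⟫) := by ring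
      _ ≤ η * ⟪g, u⟫ := mul_le_of_le_one_left (mul_nonneg hη0 hinner) hηH
  rw [norm_sub_sq_real, real_inner_smul_right, norm_smul, mul_pow, Real.norm_eq_abs,
    abs_of_nonneg hη0, real_inner_comm]
  nlinarith [mul_le_mul_of_nonneg_left hmono hη0]

theorem gradient_step_contraction_general
    (d : ℕ) (F : EuclideanSpace ℝ (Fin d) → ℝ)
    (gradF : EuclideanSpace ℝ (Fin d) → EuclideanSpace ℝ (Fin d))
    (H lam : ℝ) (hH : 0 < H) (hlam : 0 ≤ lam)
    (hsc : ∀ x y, lam / 2 * ‖y - x‖ ^ 2 ≤ F y - F x - ⟪gradF x, y - x⟫)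
    (hsm : ∀ x y, F y - F x - ⟪gradF x, y - x⟫ ≤ H / 2 * ‖y - x‖ ^ 2)
    (η : ℝ) (hη0 : 0 < η) (hη : η ≤ 1 / H) :
    ∀ x y : EuclideanSpace ℝ (Fin d),
      ‖x - η • gradF x - y + η • gradF y‖ ^ 2 ≤ (1 - lam * η) * ‖x - y‖ ^ 2 := by
  intro x y
  have hconv : ∀ x y, 0 ≤ bregmanDiv F gradF x y := fun x y =>
    (by positivity : 0 ≤ lam / 2 * ‖y - x‖ ^ 2).trans (hsc x y)
  rw [show x - η • gradF x - y + η • gradF y = (x - y) - η • (gradF x - gradF y) by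
    rw [smul_sub]; abel]
  exact norm_sub_smul_sq_le_of_inner_bounds (mul_norm_sub_sq_le_inner_sub hsc x y)
    (norm_sub_sq_le_mul_inner_sub hH hconv hsm x y) hH hη0.le hη

/-- If `F : ℝ^d → ℝ` is `H`-smooth and `λ`-strongly convex (in the sense that
`(λ/2)‖x−y‖² ≤ F y − F x − ⟪∇F x, y−x⟫ ≤ (H/2)‖x−y‖²` for all `x, y`), and `0 < η ≤ 1/H`, then
the gradient step map is a `(1 − λη)`-contraction in squared norm:
`‖x − η∇F x − y + η∇F y‖² ≤ (1 − λη)‖x − y‖²`. -/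
theorem gradient_step_contraction
    (d : ℕ) (F : EuclideanSpace ℝ (Fin d) → ℝ)
    (gradF : EuclideanSpace ℝ (Fin d) → EuclideanSpace ℝ (Fin d))
    (H lam : ℝ) (hH : 0 < H) (hlam : 0 ≤ lam)
    (hgrad : ∀ x, HasGradientAt F (gradF x) x)
    (hsc : ∀ x y, lam / 2 * ‖y - x‖ ^ 2 ≤ F y - F x - ⟪gradF x, y - x⟫)
    (hsm : ∀ x y, F y - F x - ⟪gradF x, y - x⟫ ≤ H / 2 * ‖y - x‖ ^ 2)
    (η : ℝ) (hη0 : 0 < η) (hη : η ≤ 1 / H) :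
    ∀ x y : EuclideanSpace ℝ (Fin d),
      ‖x - η • gradF x - y + η • gradF y‖ ^ 2 ≤ (1 - lam * η) * ‖x - y‖ ^ 2 :=
  gradient_step_contraction_general d F gradF H lam hH hlam hsc hsm η hη0 hη
end

section
/- Let F be H-smooth and λ-strongly convex with sup_x E_{z∼D}‖∇f(x; z) − ∇F(x)‖² ≤ σ², and run local SGD with M machines and K local steps per round with a non-increasing stepsize sequence satisfying η_t ≤ 1/H for all t. Then for every t and every machine m, E‖x_t^m − x̄_t‖² ≤ (2(M−1)(K−1)σ²/M) · η_{max(t−K+1, 0)}². -/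
/-!
Within a round, one local step sends two machines' iterates `x, x'` to
`(x - η ∇F x) - (x' - η ∇F x') - η ξ + η ξ'`, where the gradient noises `ξ, ξ'` are centred and
each independent of everything sampled before it. For convex `H`-smooth `F`, `∇F` is
`1/H`-cocoercive, so `x ↦ x - η ∇F x` is nonexpansive for `η ≤ 1/H`; the noises are orthogonal in
`L²` to that part and to each other. Hence `E‖x - x'‖²` grows by at most `2σ²η²` per local step
and is reset to `0` by every averaging, so it stays below `2σ²(K-1)η²` with `η` taken at the start
of the round. Finally `‖x^m - x̄‖² ≤ (1/M) ∑_{m'} ‖x^m - x^{m'}‖²`, where the term `m' = m`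
vanishes, which gives the factor `(M-1)/M`.
-/

open MeasureTheory ProbabilityTheory
open scoped RealInnerProductSpace BigOperators

section Smooth

variable {E : Type*} [NormedAddCommGroup E] [InnerProductSpace ℝ E]
  {F : E → ℝ} {gradF : E → E} {H : ℝ}

theorem norm_grad_sub_sq_le_bregman (hH : 0 < H)
    (hconv : ∀ x y, 0 ≤ F y - F x - ⟪gradF x, y - x⟫)
    (hsm : ∀ x y, F y - F x - ⟪gradF x, y - x⟫ ≤ H / 2 * ‖y - x‖ ^ 2) (x y : E) :
    1 / (2 * H) * ‖gradF y - gradF x‖ ^ 2 ≤ F y - F x - ⟪gradF x, y - x⟫ := by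
  set u := gradF y - gradF x
  -- test smoothness at `y` and convexity at `x` at the same point `y - H⁻¹ • u`
  have hup := hsm y (y - H⁻¹ • u)
  have hlow := hconv x (y - H⁻¹ • u)
  have hu : H⁻¹ * ⟪gradF y, u⟫ - H⁻¹ * ⟪gradF x, u⟫ = H⁻¹ * ‖u‖ ^ 2 := by
    rw [← mul_sub, ← inner_sub_left, real_inner_self_eq_norm_sq]
  rw [sub_sub_cancel_left, norm_neg, norm_smul, Real.norm_eq_abs, abs_inv,
    abs_of_pos hH, inner_neg_right, real_inner_smul_right] at hup
  rw [sub_right_comm y, inner_sub_right, real_inner_smul_right] at hlow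
  have hsq : H / 2 * (H⁻¹ * ‖u‖) ^ 2 = H⁻¹ * ‖u‖ ^ 2 - 1 / (2 * H) * ‖u‖ ^ 2 := by
    field_simp; ring
  linarith

theorem cocoercive_grad (hH : 0 < H)
    (hconv : ∀ x y, 0 ≤ F y - F x - ⟪gradF x, y - x⟫)
    (hsm : ∀ x y, F y - F x - ⟪gradF x, y - x⟫ ≤ H / 2 * ‖y - x‖ ^ 2) (x y : E) :
    1 / H * ‖gradF x - gradF y‖ ^ 2 ≤ ⟪gradF x - gradF y, x - y⟫ := by
  have hxy := norm_grad_sub_sq_le_bregman hH hconv hsm x y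
  have hyx := norm_grad_sub_sq_le_bregman hH hconv hsm y x
  rw [norm_sub_rev] at hxy
  have hinner : ⟪gradF x - gradF y, x - y⟫ = -⟪gradF x, y - x⟫ - ⟪gradF y, x - y⟫ := by
    rw [← neg_sub x y, inner_neg_right, inner_sub_left]; ring
  have hH' : H ≠ 0 := hH.ne'
  have hhalf : 1 / H * ‖gradF x - gradF y‖ ^ 2
      = 1 / (2 * H) * ‖gradF x - gradF y‖ ^ 2 + 1 / (2 * H) * ‖gradF x - gradF y‖ ^ 2 := by
    field_simp; ring
  linarith

theorem lipschitzWith_grad (hH : 0 < H)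
    (hconv : ∀ x y, 0 ≤ F y - F x - ⟪gradF x, y - x⟫)
    (hsm : ∀ x y, F y - F x - ⟪gradF x, y - x⟫ ≤ H / 2 * ‖y - x‖ ^ 2) :
    LipschitzWith H.toNNReal gradF := by
  refine LipschitzWith.of_dist_le_mul fun x y => ?_
  rw [dist_eq_norm, dist_eq_norm, Real.coe_toNNReal H hH.le]
  have hco := (cocoercive_grad hH hconv hsm x y).trans (real_inner_le_norm _ _)
  rcases (norm_nonneg (gradF x - gradF y)).eq_or_lt with h0 | h0
  · rw [← h0]; positivity
  · rw [pow_two, ← mul_assoc] at hco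
    have := le_of_mul_le_mul_right (hco.trans_eq (mul_comm _ _)) h0
    rwa [one_div, inv_mul_le_iff₀ hH] at this

theorem norm_gradStep_sub_sq_le (hH : 0 < H)
    (hconv : ∀ x y, 0 ≤ F y - F x - ⟪gradF x, y - x⟫)
    (hsm : ∀ x y, F y - F x - ⟪gradF x, y - x⟫ ≤ H / 2 * ‖y - x‖ ^ 2)
    {c : ℝ} (hc : 0 ≤ c) (hcH : c ≤ 1 / H) (x y : E) :
    ‖(x - c • gradF x) - (y - c • gradF y)‖ ^ 2 ≤ ‖x - y‖ ^ 2 := by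
  have hco := cocoercive_grad hH hconv hsm x y
  rw [show (x - c • gradF x) - (y - c • gradF y) = (x - y) - c • (gradF x - gradF y) by
      rw [smul_sub]; abel,
    norm_sub_sq_real, real_inner_smul_right, norm_smul, Real.norm_eq_abs, abs_of_nonneg hc,
    mul_pow, real_inner_comm]
  nlinarith [mul_le_mul_of_nonneg_left hco hc,
    mul_le_mul_of_nonneg_right hcH (sq_nonneg ‖gradF x - gradF y‖)]

end Smooth

section L2

variable {Ω E : Type*} [MeasurableSpace Ω] {P : Measure Ω}
  [NormedAddCommGroup E] [InnerProductSpace ℝ E]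

theorem MeasureTheory.MemLp.integrable_inner {X Y : Ω → E} (hX : MemLp X 2 P)
    (hY : MemLp Y 2 P) : Integrable (fun ω => ⟪X ω, Y ω⟫) P := by
  refine (L2.integrable_inner (𝕜 := ℝ) (hX.toLp X) (hY.toLp Y)).congr ?_
  filter_upwards [hX.coeFn_toLp, hY.coeFn_toLp] with ω hXω hYω
  rw [hXω, hYω]

theorem integral_norm_add_smul_sq {X Y : Ω → E} (hX : MemLp X 2 P) (hY : MemLp Y 2 P)
    (horth : ∫ ω, ⟪X ω, Y ω⟫ ∂P = 0) (c : ℝ) :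
    ∫ ω, ‖X ω + c • Y ω‖ ^ 2 ∂P = ∫ ω, ‖X ω‖ ^ 2 ∂P + c ^ 2 * ∫ ω, ‖Y ω‖ ^ 2 ∂P := by
  have hXX := hX.integrable_norm_pow two_ne_zero
  have hYY := hY.integrable_norm_pow two_ne_zero
  have hXY := (hX.integrable_inner hY).const_mul c
  simp_rw [norm_add_sq_real, real_inner_smul_right, norm_smul, mul_pow, Real.norm_eq_abs, sq_abs]
  rw [integral_add _ (hYY.const_mul _), integral_add hXX (hXY.const_mul 2), integral_const_mul,
    integral_const_mul, integral_const_mul, horth]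
  · ring
  · exact hXX.add (hXY.const_mul 2)

end L2

section Sampling

variable {Ω α Z E : Type*} [MeasurableSpace Ω] [MeasurableSpace α] [MeasurableSpace Z]
  {P : Measure Ω} [IsProbabilityMeasure P] {D : Measure Z} [IsProbabilityMeasure D]
  [NormedAddCommGroup E] [MeasurableSpace E] [BorelSpace E] [SecondCountableTopology E]
  {g : E → Z → E} {gradF : E → E} {W : Ω → α} {V : Ω → Z}

theorem integral_norm_noise_sq_le {σ : ℝ} (hvar : ∀ x, ∫ v, ‖g x v - gradF x‖ ^ 2 ∂D ≤ σ ^ 2)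
    (hg : Measurable (Function.uncurry g)) (hgradF : Measurable gradF)
    (hW : Measurable W) (hV : Measurable V) (hWV : IndepFun W V P) (hVlaw : P.map V = D)
    {b : α → E} (hb : Measurable b) :
    ∫ ω, ‖g (b (W ω)) (V ω) - gradF (b (W ω))‖ ^ 2 ∂P ≤ σ ^ 2 := by
  have hpair : Measurable fun ω => (W ω, V ω) := hW.prodMk hV
  have hlaw : P.map (fun ω => (W ω, V ω)) = (P.map W).prod D :=
    hVlaw ▸ hWV.map_prod_eq_prod_map_map hW.aemeasurable hV.aemeasurable
  set φ : α × Z → ℝ := fun p => ‖g (b p.1) p.2 - gradF (b p.1)‖ ^ 2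
  have hφ : Measurable φ :=
    ((hg.comp ((hb.comp measurable_fst).prodMk measurable_snd)).sub
      (hgradF.comp (hb.comp measurable_fst))).norm.pow_const 2
  change ∫ ω, φ (W ω, V ω) ∂P ≤ σ ^ 2
  rw [← integral_map hpair.aemeasurable hφ.aestronglyMeasurable, hlaw]
  by_cases hφint : Integrable φ ((P.map W).prod D)
  swap
  · rw [integral_undef hφint]; positivity
  have : IsProbabilityMeasure (P.map W) := Measure.isProbabilityMeasure_map hW.aemeasurable
  rw [integral_prod φ hφint]
  calc ∫ w, ∫ v, φ (w, v) ∂D ∂(P.map W) ≤ ∫ _, σ ^ 2 ∂(P.map W) :=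
        integral_mono_of_nonneg (.of_forall fun w => integral_nonneg fun v => sq_nonneg _)
          (integrable_const _) (.of_forall fun w => hvar (b w))
    _ = σ ^ 2 := by simp

variable [InnerProductSpace ℝ E] [CompleteSpace E]

theorem integral_inner_noise_eq_zero (hunb : ∀ x, ∫ v, g x v ∂D = gradF x)
    (hg : Measurable (Function.uncurry g)) (hgradF : Measurable gradF)
    (hW : Measurable W) (hV : Measurable V) (hWV : IndepFun W V P) (hVlaw : P.map V = D)
    {a b : α → E} (ha : Measurable a) (hb : Measurable b)
    (hint : Integrable (fun ω => g (b (W ω)) (V ω)) P) :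
    ∫ ω, ⟪a (W ω), g (b (W ω)) (V ω) - gradF (b (W ω))⟫ ∂P = 0 := by
  have hpair : Measurable fun ω => (W ω, V ω) := hW.prodMk hV
  have hlaw : P.map (fun ω => (W ω, V ω)) = (P.map W).prod D :=
    hVlaw ▸ hWV.map_prod_eq_prod_map_map hW.aemeasurable hV.aemeasurable
  have hgb : Measurable fun p : α × Z => g (b p.1) p.2 :=
    hg.comp ((hb.comp measurable_fst).prodMk measurable_snd)
  set φ : α × Z → ℝ := fun p => ⟪a p.1, g (b p.1) p.2 - gradF (b p.1)⟫
  have hφ : Measurable φ :=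
    (ha.comp measurable_fst).inner (hgb.sub (hgradF.comp (hb.comp measurable_fst)))
  change ∫ ω, φ (W ω, V ω) ∂P = 0
  by_cases hφint : Integrable (fun ω => φ (W ω, V ω)) P
  swap
  · exact integral_undef hφint
  replace hφint : Integrable φ ((P.map W).prod D) :=
    hlaw ▸ (integrable_map_measure hφ.aestronglyMeasurable hpair.aemeasurable).mpr hφint
  replace hint : Integrable (fun p : α × Z => g (b p.1) p.2) ((P.map W).prod D) :=
    hlaw ▸ (integrable_map_measure hgb.aestronglyMeasurable hpair.aemeasurable).mpr hint
  rw [← integral_map hpair.aemeasurable hφ.aestronglyMeasurable, hlaw, integral_prod φ hφint]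
  refine integral_eq_zero_of_ae ?_
  filter_upwards [hint.prod_right_ae] with w hw
  simp only [φ, Pi.zero_apply]
  rw [integral_inner (f := fun v => g (b w) v - gradF (b w)) (hw.sub (integrable_const _)),
    integral_sub hw (integrable_const _), hunb, integral_const, probReal_univ, one_smul, sub_self,
    inner_zero_right]

end Sampling

theorem LipschitzWith.comp_memLp_of_isFiniteMeasure {Ω E F : Type*} [MeasurableSpace Ω]
    {P : Measure Ω} [IsFiniteMeasure P] [NormedAddCommGroup E] [NormedAddCommGroup F]
    {K : NNReal} {f : E → F} (hf : LipschitzWith K f) {p : ENNReal} {Y : Ω → E}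
    (hY : MemLp Y p P) : MemLp (fun ω => f (Y ω)) p P := by
  have h0 := (hf.sub (LipschitzWith.const (f 0))).comp_memLp (by simp) hY
  convert h0.add (memLp_const (f 0)) using 1
  ext ω
  simp

section Step

variable {Ω Z E : Type*} [MeasurableSpace Ω] [MeasurableSpace Z]
  {P : Measure Ω} [IsProbabilityMeasure P] {D : Measure Z} [IsProbabilityMeasure D]
  [NormedAddCommGroup E] [InnerProductSpace ℝ E] [CompleteSpace E]
  [MeasurableSpace E] [BorelSpace E] [SecondCountableTopology E]
  {F : E → ℝ} {gradF : E → E} {g : E → Z → E} {H σ c : ℝ}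

theorem integral_norm_sgdStep_sub_sq_le (hH : 0 < H)
    (hconv : ∀ x y, 0 ≤ F y - F x - ⟪gradF x, y - x⟫)
    (hsm : ∀ x y, F y - F x - ⟪gradF x, y - x⟫ ≤ H / 2 * ‖y - x‖ ^ 2)
    (hunb : ∀ x, ∫ v, g x v ∂D = gradF x)
    (hvar : ∀ x, ∫ v, ‖g x v - gradF x‖ ^ 2 ∂D ≤ σ ^ 2)
    (hg : Measurable (Function.uncurry g)) (hc : 0 ≤ c) (hcH : c ≤ 1 / H)
    {X X' : Ω → E} {V V' : Ω → Z} (hX : Measurable X) (hX' : Measurable X')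
    (hV : Measurable V) (hV' : Measurable V') (hVlaw : P.map V = D) (hV'law : P.map V' = D)
    (hind : IndepFun (fun ω => (X ω, X' ω)) V P)
    (hind' : IndepFun (fun ω => ((X ω, X' ω), V ω)) V' P)
    (hXL2 : MemLp X 2 P) (hX'L2 : MemLp X' 2 P)
    (hgL2 : MemLp (fun ω => g (X ω) (V ω)) 2 P) (hg'L2 : MemLp (fun ω => g (X' ω) (V' ω)) 2 P) :
    ∫ ω, ‖(X ω - c • g (X ω) (V ω)) - (X' ω - c • g (X' ω) (V' ω))‖ ^ 2 ∂P
      ≤ ∫ ω, ‖X ω - X' ω‖ ^ 2 ∂P + 2 * σ ^ 2 * c ^ 2 := by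
  have hlip := lipschitzWith_grad hH hconv hsm
  have hgradF : Measurable gradF := hlip.continuous.measurable
  set step : E × E → E := fun w => (w.1 - c • gradF w.1) - (w.2 - c • gradF w.2)
  have hstep : Measurable step :=
    (measurable_fst.sub ((hgradF.comp measurable_fst).const_smul c)).sub
      (measurable_snd.sub ((hgradF.comp measurable_snd).const_smul c))
  set A : Ω → E := fun ω => step (X ω, X' ω)
  set ξ : Ω → E := fun ω => g (X ω) (V ω) - gradF (X ω)
  set ξ' : Ω → E := fun ω => g (X' ω) (V' ω) - gradF (X' ω)
  have hAL2 : MemLp A 2 P :=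
    (hXL2.sub ((hlip.comp_memLp_of_isFiniteMeasure hXL2).const_smul c)).sub
      (hX'L2.sub ((hlip.comp_memLp_of_isFiniteMeasure hX'L2).const_smul c))
  have hξL2 : MemLp ξ 2 P := hgL2.sub (hlip.comp_memLp_of_isFiniteMeasure hXL2)
  have hξ'L2 : MemLp ξ' 2 P := hg'L2.sub (hlip.comp_memLp_of_isFiniteMeasure hX'L2)
  have hsplit : ∀ ω, (X ω - c • g (X ω) (V ω)) - (X' ω - c • g (X' ω) (V' ω))
      = (A ω + (-c) • ξ ω) + c • ξ' ω := fun ω => by simp only [A, step, ξ, ξ']; module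
  have horth : ∫ ω, ⟪A ω, ξ ω⟫ ∂P = 0 :=
    integral_inner_noise_eq_zero hunb hg hgradF (hX.prodMk hX') hV hind hVlaw hstep
      measurable_fst (hgL2.integrable one_le_two)
  have horth' : ∫ ω, ⟪A ω + (-c) • ξ ω, ξ' ω⟫ ∂P = 0 :=
    integral_inner_noise_eq_zero hunb hg hgradF ((hX.prodMk hX').prodMk hV) hV' hind' hV'law
      (a := fun w => step w.1 + (-c) • (g w.1.1 w.2 - gradF w.1.1))
      ((hstep.comp measurable_fst).add (((hg.comp ((measurable_fst.comp measurable_fst).prodMk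
        measurable_snd)).sub (hgradF.comp (measurable_fst.comp measurable_fst))).const_smul _))
      (measurable_snd.comp measurable_fst) (hg'L2.integrable one_le_two)
  have hA : ∫ ω, ‖A ω‖ ^ 2 ∂P ≤ ∫ ω, ‖X ω - X' ω‖ ^ 2 ∂P :=
    integral_mono_of_nonneg (.of_forall fun ω => sq_nonneg _)
      ((hXL2.sub hX'L2).integrable_norm_pow two_ne_zero)
      (.of_forall fun ω => norm_gradStep_sub_sq_le hH hconv hsm hc hcH (X ω) (X' ω))
  have hξ : ∫ ω, ‖ξ ω‖ ^ 2 ∂P ≤ σ ^ 2 :=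
    integral_norm_noise_sq_le hvar hg hgradF (hX.prodMk hX') hV hind hVlaw measurable_fst
  have hξ' : ∫ ω, ‖ξ' ω‖ ^ 2 ∂P ≤ σ ^ 2 :=
    integral_norm_noise_sq_le hvar hg hgradF ((hX.prodMk hX').prodMk hV) hV' hind' hV'law
      (measurable_snd.comp measurable_fst)
  simp_rw [hsplit]
  rw [integral_norm_add_smul_sq (X := fun ω => A ω + (-c) • ξ ω)
      (hAL2.add (hξL2.const_smul _)) hξ'L2 horth', integral_norm_add_smul_sq hAL2 hξL2 horth,
    neg_sq]
  nlinarith [mul_le_mul_of_nonneg_left hξ (sq_nonneg c),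
    mul_le_mul_of_nonneg_left hξ' (sq_nonneg c)]

end Step

theorem le_mod_mul_sq_of_le_add_sq {K : ℕ} {a η : ℕ → ℝ} {B : ℝ} (hB : 0 ≤ B)
    (hη : ∀ t, 0 ≤ η t) (hanti : Antitone η) (h0 : a 0 = 0)
    (hsync : ∀ t, (t + 1) % K = 0 → a (t + 1) = 0)
    (hstep : ∀ t, (t + 1) % K ≠ 0 → a (t + 1) ≤ a t + B * η t ^ 2) (t : ℕ) :
    a t ≤ B * (t % K : ℕ) * η (K * (t / K)) ^ 2 := by
  -- `K * (t / K)` is the first step of the round containing `t`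
  induction t with
  | zero => simp [h0]
  | succ t ih =>
    by_cases ht : (t + 1) % K = 0
    · simp [hsync t ht, ht]
    have hdiv : (t + 1) / K = t / K :=
      Nat.succ_div_of_not_dvd fun h => ht (Nat.mod_eq_zero_of_dvd h)
    have hmod : (t + 1) % K = t % K + 1 := by
      have := Nat.div_add_mod t K
      have := Nat.div_add_mod (t + 1) K
      rw [hdiv] at this
      omega
    have hη_le : η t ^ 2 ≤ η (K * (t / K)) ^ 2 :=
      pow_le_pow_left₀ (hη t) (hanti (Nat.mul_div_le t K)) 2
    rw [hmod, hdiv]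
    push_cast
    nlinarith [hstep t ht, mul_le_mul_of_nonneg_left hη_le hB]

theorem le_pred_mul_sq_of_le_add_sq {K : ℕ} (hK : 1 ≤ K) {a η : ℕ → ℝ} {B : ℝ} (hB : 0 ≤ B)
    (hη : ∀ t, 0 ≤ η t) (hanti : Antitone η) (h0 : a 0 = 0)
    (hsync : ∀ t, (t + 1) % K = 0 → a (t + 1) = 0)
    (hstep : ∀ t, (t + 1) % K ≠ 0 → a (t + 1) ≤ a t + B * η t ^ 2) (t : ℕ) :
    a t ≤ B * ((K : ℝ) - 1) * η (t + 1 - K) ^ 2 := by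
  refine (le_mod_mul_sq_of_le_add_sq hB hη hanti h0 hsync hstep t).trans ?_
  have hmod : ((t % K : ℕ) : ℝ) ≤ (K : ℝ) - 1 := by
    have := Nat.mod_lt t hK
    rw [le_sub_iff_add_le]; exact_mod_cast this
  have hstart : η (K * (t / K)) ≤ η (t + 1 - K) := by
    refine hanti ?_
    have := Nat.div_add_mod t K
    have := Nat.mod_lt t hK
    omega
  have hK' : (1 : ℝ) ≤ K := by exact_mod_cast hK
  exact mul_le_mul (mul_le_mul_of_nonneg_left hmod hB) (pow_le_pow_left₀ (hη _) hstart 2)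
    (sq_nonneg _) (mul_nonneg hB (by linarith))

theorem norm_sub_average_sq_le {ι E : Type*} [Fintype ι] [NormedAddCommGroup E]
    [NormedSpace ℝ E] (v : ι → E) (i : ι) :
    ‖v i - (Fintype.card ι : ℝ)⁻¹ • ∑ j, v j‖ ^ 2
      ≤ (Fintype.card ι : ℝ)⁻¹ * ∑ j, ‖v i - v j‖ ^ 2 := by
  have hn : (Fintype.card ι : ℝ) ≠ 0 := Nat.cast_ne_zero.mpr (Fintype.card_pos_iff.2 ⟨i⟩).ne'
  have hdev : v i - (Fintype.card ι : ℝ)⁻¹ • ∑ j, v j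
      = (Fintype.card ι : ℝ)⁻¹ • ∑ j, (v i - v j) := by
    rw [Finset.sum_sub_distrib, smul_sub, Finset.sum_const, Finset.card_univ,
      ← Nat.cast_smul_eq_nsmul ℝ, smul_smul, inv_mul_cancel₀ hn, one_smul]
  calc ‖v i - (Fintype.card ι : ℝ)⁻¹ • ∑ j, v j‖ ^ 2
      = (Fintype.card ι : ℝ)⁻¹ ^ 2 * ‖∑ j, (v i - v j)‖ ^ 2 := by
        rw [hdev, norm_smul, mul_pow, Real.norm_eq_abs, sq_abs]
    _ ≤ (Fintype.card ι : ℝ)⁻¹ ^ 2 * (Fintype.card ι * ∑ j, ‖v i - v j‖ ^ 2) := by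
        gcongr
        exact (pow_le_pow_left₀ (norm_nonneg _) (norm_sum_le _ _) 2).trans (by
          simpa using sq_sum_le_card_mul_sum_sq (s := Finset.univ) (f := fun j => ‖v i - v j‖))
    _ = (Fintype.card ι : ℝ)⁻¹ * ∑ j, ‖v i - v j‖ ^ 2 := by
        field_simp

theorem integral_norm_sub_average_sq_le {Ω ι E : Type*} [MeasurableSpace Ω] {P : Measure Ω}
    [Fintype ι] [NormedAddCommGroup E] [NormedSpace ℝ E] {X : ι → Ω → E}
    (hX : ∀ i, MemLp (X i) 2 P) {B : ℝ} (i : ι)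
    (hB : ∀ j, j ≠ i → ∫ ω, ‖X i ω - X j ω‖ ^ 2 ∂P ≤ B) :
    ∫ ω, ‖X i ω - (Fintype.card ι : ℝ)⁻¹ • ∑ j, X j ω‖ ^ 2 ∂P
      ≤ (Fintype.card ι : ℝ)⁻¹ * (((Fintype.card ι : ℝ) - 1) * B) := by
  classical
  have hint : ∀ j, Integrable (fun ω => ‖X i ω - X j ω‖ ^ 2) P :=
    fun j => ((hX i).sub (hX j)).integrable_norm_pow two_ne_zero
  calc ∫ ω, ‖X i ω - (Fintype.card ι : ℝ)⁻¹ • ∑ j, X j ω‖ ^ 2 ∂P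
      ≤ ∫ ω, (Fintype.card ι : ℝ)⁻¹ * ∑ j, ‖X i ω - X j ω‖ ^ 2 ∂P :=
        integral_mono_of_nonneg (.of_forall fun ω => sq_nonneg _)
          ((integrable_finsetSum _ fun j _ => hint j).const_mul _)
          (.of_forall fun ω => norm_sub_average_sq_le (fun j => X j ω) i)
    _ = (Fintype.card ι : ℝ)⁻¹ * ∑ j, ∫ ω, ‖X i ω - X j ω‖ ^ 2 ∂P := by
        rw [integral_const_mul, integral_finsetSum _ fun j _ => hint j]
    _ ≤ (Fintype.card ι : ℝ)⁻¹ * (((Fintype.card ι : ℝ) - 1) * B) := by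
        gcongr
        rw [← Finset.add_sum_erase _ _ (Finset.mem_univ i)]
        simp only [sub_self, norm_zero, ne_eq, OfNat.ofNat_ne_zero, not_false_eq_true,
          zero_pow, integral_zero, zero_add]
        have hcard : (((Finset.univ.erase i).card : ℕ) : ℝ) = Fintype.card ι - 1 := by
          rw [Finset.card_erase_of_mem (Finset.mem_univ i), Finset.card_univ,
            Nat.cast_pred (Fintype.card_pos_iff.2 ⟨i⟩)]
        rw [← hcard, ← nsmul_eq_mul]
        exact Finset.sum_le_card_nsmul _ _ _ fun j hj => hB j (Finset.ne_of_mem_erase hj)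

theorem ProbabilityTheory.iIndepFun.indepFun_of_measurable_iSup {Ω ι β γ : Type*}
    [MeasurableSpace Ω] {P : Measure Ω} {mβ : MeasurableSpace β} [MeasurableSpace γ]
    {z : ι → Ω → β} (hz : iIndepFun z P) (hmeas : ∀ i, Measurable (z i)) {S : Set ι} {i : ι}
    (hi : i ∉ S) {W : Ω → γ} (hW : Measurable[⨆ j ∈ S, mβ.comap (z j)] W) :
    IndepFun W (z i) P := by
  rw [IndepFun_iff_Indep]
  have := indep_iSup_of_disjoint (fun j => (hmeas j).comap_le)
    ((iIndepFun_iff_iIndep _ _ _).mp hz) (Set.disjoint_singleton_right.mpr hi)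
  refine indep_of_indep_of_le_right (indep_of_indep_of_le_left this hW.comap_le) ?_
  exact le_iSup₂ (f := fun j (_ : j ∈ ({i} : Set ι)) => mβ.comap (z j)) i rfl

abbrev sampleSigma {Ω ι Z : Type*} [mZ : MeasurableSpace Z] (z : ℕ → ι → Ω → Z)
    (S : Set (ℕ × ι)) : MeasurableSpace Ω :=
  ⨆ p ∈ S, mZ.comap (z p.1 p.2)

theorem measurable_sampleSigma {Ω ι Z : Type*} [mZ : MeasurableSpace Z] {z : ℕ → ι → Ω → Z}
    {S : Set (ℕ × ι)} {p : ℕ × ι} (hp : p ∈ S) : Measurable[sampleSigma z S] (z p.1 p.2) :=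
  (comap_measurable _).mono (le_iSup₂ (f := fun p (_ : p ∈ S) => mZ.comap (z p.1 p.2)) p hp) le_rfl

section Iterates

variable {Ω Z E : Type*} [MeasurableSpace Z]
  [NormedAddCommGroup E] [NormedSpace ℝ E]
  [MeasurableSpace E] [BorelSpace E] [SecondCountableTopology E]
  {g : E → Z → E} {M K : ℕ} {η : ℕ → ℝ} {z : ℕ → Fin M → Ω → Z} {x : ℕ → Fin M → Ω → E}

theorem measurable_iterates (hg : Measurable (Function.uncurry g))
    (hx0 : ∀ m ω, x 0 m ω = 0)
    (hxup : ∀ t m ω, x (t + 1) m ω =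
      if (t + 1) % K = 0 then
        (M : ℝ)⁻¹ • ∑ m' : Fin M, (x t m' ω - η t • g (x t m' ω) (z t m' ω))
      else x t m ω - η t • g (x t m ω) (z t m ω)) (t : ℕ) :
    Measurable[sampleSigma z {p : ℕ × Fin M | p.1 < t}]
      (fun ω m => x t m ω) := by
  induction t with
  | zero => simp only [hx0]; exact measurable_const
  | succ t ih =>
    set 𝓕 := sampleSigma z {p : ℕ × Fin M | p.1 < t + 1}
    have hx : ∀ m, Measurable[𝓕] (x t m) := fun m =>
      (measurable_pi_apply m).comp (ih.mono (biSup_mono fun p hp => Nat.lt_succ_of_lt hp) le_rfl)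
    have hz : ∀ m, Measurable[𝓕] (z t m) := fun m =>
      measurable_sampleSigma (p := (t, m)) (Nat.lt_succ_self t)
    have hstep : ∀ m, Measurable[𝓕] fun ω => x t m ω - η t • g (x t m ω) (z t m ω) :=
      fun m => (hx m).sub ((hg.comp ((hx m).prodMk (hz m))).const_smul _)
    simp only [hxup]
    refine measurable_pi_lambda _ fun m => ?_
    split_ifs
    · exact (Finset.measurable_sum _ fun m' _ => hstep m').const_smul _
    · exact hstep m

end Iterates

section LocalSGD

variable {Ω Z E : Type*} [mΩ : MeasurableSpace Ω] [MeasurableSpace Z]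
  {P : Measure Ω} [IsProbabilityMeasure P] {D : Measure Z} [IsProbabilityMeasure D]
  [NormedAddCommGroup E] [InnerProductSpace ℝ E] [CompleteSpace E]
  [MeasurableSpace E] [BorelSpace E] [SecondCountableTopology E]
  {F : E → ℝ} {gradF : E → E} {g : E → Z → E} {H σ : ℝ}
  {M K : ℕ} {η : ℕ → ℝ} {z : ℕ → Fin M → Ω → Z} {x : ℕ → Fin M → Ω → E}

theorem integral_norm_iterate_sub_sq_succ_le (hH : 0 < H)
    (hconv : ∀ x y, 0 ≤ F y - F x - ⟪gradF x, y - x⟫)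
    (hsm : ∀ x y, F y - F x - ⟪gradF x, y - x⟫ ≤ H / 2 * ‖y - x‖ ^ 2)
    (hunb : ∀ x, ∫ v, g x v ∂D = gradF x)
    (hvar : ∀ x, ∫ v, ‖g x v - gradF x‖ ^ 2 ∂D ≤ σ ^ 2)
    (hg : Measurable (Function.uncurry g)) {t : ℕ} (hη : 0 ≤ η t) (hηH : η t ≤ 1 / H)
    (hzmeas : ∀ t m, Measurable (z t m)) (hzlaw : ∀ t m, P.map (z t m) = D)
    (hziid : iIndepFun (fun p : ℕ × Fin M => z p.1 p.2) P)
    (hxF : Measurable[sampleSigma z {p : ℕ × Fin M | p.1 < t}]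
      (fun ω m => x t m ω))
    (hxup : ∀ t m ω, x (t + 1) m ω =
      if (t + 1) % K = 0 then
        (M : ℝ)⁻¹ • ∑ m' : Fin M, (x t m' ω - η t • g (x t m' ω) (z t m' ω))
      else x t m ω - η t • g (x t m ω) (z t m ω))
    (hxL2 : ∀ m, MemLp (x t m) 2 P) (hgL2 : ∀ m, MemLp (fun ω => g (x t m ω) (z t m ω)) 2 P)
    {m m' : Fin M} (hmm : m ≠ m') (ht : (t + 1) % K ≠ 0) :
    ∫ ω, ‖x (t + 1) m ω - x (t + 1) m' ω‖ ^ 2 ∂P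
      ≤ ∫ ω, ‖x t m ω - x t m' ω‖ ^ 2 ∂P + 2 * σ ^ 2 * η t ^ 2 := by
  have hpast : ∀ k, Measurable[sampleSigma z {p : ℕ × Fin M | p.1 < t}] (x t k) :=
    fun k => (measurable_pi_apply k).comp hxF
  have hle : (sampleSigma z {p : ℕ × Fin M | p.1 < t}) ≤ mΩ :=
    iSup₂_le fun p _ => (hzmeas p.1 p.2).comap_le
  have hind : IndepFun (fun ω => (x t m ω, x t m' ω)) (z t m) P :=
    hziid.indepFun_of_measurable_iSup (i := (t, m)) (fun p => hzmeas p.1 p.2)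
      (lt_irrefl t) ((hpast m).prodMk (hpast m'))
  have hind' : IndepFun (fun ω => ((x t m ω, x t m' ω), z t m ω)) (z t m') P := by
    refine hziid.indepFun_of_measurable_iSup (i := (t, m')) (fun p => hzmeas p.1 p.2)
      (S := {p | p.1 < t ∨ p = (t, m)}) (by simp [hmm.symm]) ?_
    exact ((hpast m).prodMk (hpast m')).mono (biSup_mono fun p hp => Or.inl hp) le_rfl
      |>.prodMk (measurable_sampleSigma (p := (t, m)) (Or.inr rfl))
  simp only [hxup t _ _, if_neg ht]
  exact integral_norm_sgdStep_sub_sq_le hH hconv hsm hunb hvar hg hη hηH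
    ((hpast m).mono hle le_rfl) ((hpast m').mono hle le_rfl) (hzmeas t m) (hzmeas t m')
    (hzlaw t m) (hzlaw t m') hind hind' (hxL2 m) (hxL2 m') (hgL2 m) (hgL2 m')

end LocalSGD

theorem local_sgd_iterate_dispersion_bound_general
    (d : ℕ) (H lam σ : ℝ) (hH : 0 < H) (hlam : 0 ≤ lam)
    (Z : Type) [MeasurableSpace Z] (D : Measure Z) [IsProbabilityMeasure D]
    (F : Euc d → ℝ) (gradF : Euc d → Euc d)
    (g : Euc d → Z → Euc d)
    (hunb : ∀ x, ∫ z, g x z ∂D = gradF x)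
    (hvar : ∀ x, ∫ z, ‖g x z - gradF x‖ ^ 2 ∂D ≤ σ ^ 2)
    (hsc : ∀ x y, lam / 2 * ‖y - x‖ ^ 2 ≤ F y - F x - ⟪gradF x, y - x⟫)
    (hsm : ∀ x y, F y - F x - ⟪gradF x, y - x⟫ ≤ H / 2 * ‖y - x‖ ^ 2)
    (M K : ℕ) (hK : 1 ≤ K)
    (η : ℕ → ℝ) (hηpos : ∀ t, 0 < η t) (hηH : ∀ t, η t ≤ 1 / H)
    (hηmono : ∀ s t, s ≤ t → η t ≤ η s)
    (Ω : Type) [MeasurableSpace Ω] (P : Measure Ω) [IsProbabilityMeasure P]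
    (z : ℕ → Fin M → Ω → Z)
    (hzmeas : ∀ t m, Measurable (z t m))
    (hzlaw : ∀ t m, Measure.map (z t m) P = D)
    (hziid : iIndepFun (fun p : ℕ × Fin M => z p.1 p.2) P)
    (hgmeas : Measurable (Function.uncurry g))
    (x : ℕ → Fin M → Ω → Euc d)
    (hx0 : ∀ m ω, x 0 m ω = 0)
    (hxup : ∀ t m ω, x (t + 1) m ω =
      if (t + 1) % K = 0 then
        (M : ℝ)⁻¹ • ∑ m' : Fin M, (x t m' ω - η t • g (x t m' ω) (z t m' ω))
      else x t m ω - η t • g (x t m ω) (z t m ω))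
    (hxL2 : ∀ t m, MemLp (x t m) 2 P)
    (hgL2 : ∀ t m, MemLp (fun ω => g (x t m ω) (z t m ω)) 2 P) :
    ∀ (t : ℕ) (m : Fin M),
      ∫ ω, ‖x t m ω - (M : ℝ)⁻¹ • ∑ m' : Fin M, x t m' ω‖ ^ 2 ∂P
        ≤ 2 * ((M : ℝ) - 1) * ((K : ℝ) - 1) * σ ^ 2 / M * η (t + 1 - K) ^ 2 := by
  intro t m
  have hconv : ∀ a b, 0 ≤ F b - F a - ⟪gradF a, b - a⟫ := fun a b =>
    (by positivity : 0 ≤ lam / 2 * ‖b - a‖ ^ 2).trans (hsc a b)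
  have hxF := measurable_iterates hgmeas hx0 hxup
  have hpair : ∀ m', m' ≠ m →
      ∫ ω, ‖x t m ω - x t m' ω‖ ^ 2 ∂P ≤ 2 * σ ^ 2 * ((K : ℝ) - 1) * η (t + 1 - K) ^ 2 :=
    fun m' hm' => le_pred_mul_sq_of_le_add_sq (a := fun s => ∫ ω, ‖x s m ω - x s m' ω‖ ^ 2 ∂P)
      hK (by positivity) (fun s => (hηpos s).le) hηmono (by simp [hx0])
      (fun s hs => by simp [hxup s _ _, if_pos hs])
      (fun s hs => integral_norm_iterate_sub_sq_succ_le hH hconv hsm hunb hvar hgmeas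
        (hηpos s).le (hηH s) hzmeas hzlaw hziid (hxF s) hxup (hxL2 s) (hgL2 s) hm'.symm hs) t
  have havg := integral_norm_sub_average_sq_le (hxL2 t) m hpair
  rw [Fintype.card_fin] at havg
  refine havg.trans_eq ?_
  field_simp

/-- For `F` `H`-smooth and `λ`-strongly convex with stochastic gradient
variance at most `σ²`, local SGD with `M` machines, `K` local steps per round and a
non-increasing stepsize sequence `η t ≤ 1/H` satisfies, for every `t` and machine `m`,
`E‖x t m − x̄ t‖² ≤ (2(M−1)(K−1)σ²/M) · η_{max(t−K+1,0)}²`.  (In `ℕ`-subtraction,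
`max(t−K+1, 0)` is `t + 1 - K`.) -/
theorem local_sgd_iterate_dispersion_bound
    (d : ℕ) (H lam σ : ℝ) (hH : 0 < H) (hlam : 0 ≤ lam)
    (Z : Type) [MeasurableSpace Z] (D : Measure Z) [IsProbabilityMeasure D]
    (f : Euc d → Z → ℝ) (F : Euc d → ℝ) (gradF : Euc d → Euc d)
    (g : Euc d → Z → Euc d)
    (hF : ∀ x, F x = ∫ z, f x z ∂D)
    (hfgrad : ∀ x z, HasGradientAt (fun y => f y z) (g x z) x)
    (hunb : ∀ x, ∫ z, g x z ∂D = gradF x)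
    (hvar : ∀ x, ∫ z, ‖g x z - gradF x‖ ^ 2 ∂D ≤ σ ^ 2)
    (hFgrad : ∀ x, HasGradientAt F (gradF x) x)
    (hsc : ∀ x y, lam / 2 * ‖y - x‖ ^ 2 ≤ F y - F x - ⟪gradF x, y - x⟫)
    (hsm : ∀ x y, F y - F x - ⟪gradF x, y - x⟫ ≤ H / 2 * ‖y - x‖ ^ 2)
    (M K : ℕ) (hM : 1 ≤ M) (hK : 1 ≤ K)
    (η : ℕ → ℝ) (hηpos : ∀ t, 0 < η t) (hηH : ∀ t, η t ≤ 1 / H)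
    (hηmono : ∀ s t, s ≤ t → η t ≤ η s)
    (Ω : Type) [MeasurableSpace Ω] (P : Measure Ω) [IsProbabilityMeasure P]
    (z : ℕ → Fin M → Ω → Z)
    (hzmeas : ∀ t m, Measurable (z t m))
    (hzlaw : ∀ t m, Measure.map (z t m) P = D)
    (hziid : iIndepFun (fun p : ℕ × Fin M => z p.1 p.2) P)
    (hgmeas : Measurable (Function.uncurry g))
    (x : ℕ → Fin M → Ω → Euc d)
    (hx0 : ∀ m ω, x 0 m ω = 0)
    (hxup : ∀ t m ω, x (t + 1) m ω =
      if (t + 1) % K = 0 then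
        (M : ℝ)⁻¹ • ∑ m' : Fin M, (x t m' ω - η t • g (x t m' ω) (z t m' ω))
      else x t m ω - η t • g (x t m ω) (z t m ω))
    (hxL2 : ∀ t m, MemLp (x t m) 2 P)
    (hgL2 : ∀ t m, MemLp (fun ω => g (x t m ω) (z t m ω)) 2 P) :
    ∀ (t : ℕ) (m : Fin M),
      ∫ ω, ‖x t m ω - (M : ℝ)⁻¹ • ∑ m' : Fin M, x t m' ω‖ ^ 2 ∂P
        ≤ 2 * ((M : ℝ) - 1) * ((K : ℝ) - 1) * σ ^ 2 / M * η (t + 1 - K) ^ 2 :=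
  local_sgd_iterate_dispersion_bound_general d H lam σ hH hlam Z D F gradF g hunb hvar hsc hsm M K
    hK η hηpos hηH hηmono Ω P z hzmeas hzlaw hziid hgmeas x hx0 hxup hxL2 hgL2
end

section
/- Fix L, η, σ > 0 with Lη ≤ 1/2 and let k ≥ 2. Let x₀ be an integrable random initial point with E[x₀] ≤ 0, and define the SGD iterates x_{j+1} = x_j − η (g_L'(x_j) + z_j) on g_L, where z₀, …, z_{k−1} are i.i.d. uniform on {+σ, −σ} and independent of x₀. Then E[x_k] ≤ −ησ/48 if E[x₀] ≤ −ησ/48, and E[x_k] ≤ −ησ/4 + (1 − Lη)^{k/2}(E[x₀] + ησ/4) if −ησ/48 < E[x₀] ≤ 0. -/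
/-!
Write `m j = E[x_j]` and `p j = E[max x_j 0]`. Since the noise is centred, the update gives
`m (j+1) = (1 - Lη) m j - Lη p j`. On the event `z_j = -σ`, which has probability `1/2` and is
independent of `x_j`, the iterate `x_{j+1}` equals `x_j - η g_L'(x_j) + ησ`, whose mean is
`m (j+1) + ησ`; hence `p (j+1) ≥ (m (j+1) + ησ) / 2`. Together these give
`m (j+2) + ησ/4 ≤ (1 - 3Lη/2) (m (j+1) + ησ/4)`, and `1 - 3Lη/2 ≤ √(1 - Lη)`, so both bounds
follow by iterating from an estimate of `m 2`.
-/

open MeasureTheory ProbabilityTheory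

/-- The two-point noise distribution placing mass `1/2` on each of `σ` and `-σ`. -/
noncomputable def twoPoint (σ : ℝ) : Measure ℝ :=
  (2⁻¹ : ENNReal) • Measure.dirac σ + (2⁻¹ : ENNReal) • Measure.dirac (-σ)

/-- The derivative of `g_L(x) = (L/2)x² + (L/2)[x]₊²`, namely `g_L'(x) = Lx + L[x]₊`. -/
noncomputable def gDeriv (L x : ℝ) : ℝ := L * x + L * max x 0

theorem integrable_twoPoint (σ : ℝ) (f : ℝ → ℝ) : Integrable f (twoPoint σ) :=
  ((integrable_dirac enorm_lt_top).smul_measure (by norm_num)).add_measure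
    ((integrable_dirac enorm_lt_top).smul_measure (by norm_num))

theorem integral_twoPoint (σ : ℝ) (f : ℝ → ℝ) :
    ∫ x, f x ∂twoPoint σ = (f σ + f (-σ)) / 2 := by
  rw [twoPoint, integral_add_measure ((integrable_dirac enorm_lt_top).smul_measure (by norm_num))
      ((integrable_dirac enorm_lt_top).smul_measure (by norm_num)),
    integral_smul_measure, integral_smul_measure, integral_dirac, integral_dirac]
  simp only [ENNReal.toReal_inv, ENNReal.toReal_ofNat, smul_eq_mul]
  ring

section TwoPointLaw

variable {Ω : Type*} [MeasurableSpace Ω] {P : Measure Ω} {Z : Ω → ℝ} {σ : ℝ}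

theorem integrable_comp_of_map_eq_twoPoint (hZ : Measurable Z) (hlaw : P.map Z = twoPoint σ)
    (f : ℝ → ℝ) : Integrable (fun ω => f (Z ω)) P :=
  (hlaw ▸ integrable_twoPoint σ f).comp_aemeasurable hZ.aemeasurable

theorem integral_comp_of_map_eq_twoPoint (hZ : Measurable Z) (hlaw : P.map Z = twoPoint σ)
    (f : ℝ → ℝ) : ∫ ω, f (Z ω) ∂P = (f σ + f (-σ)) / 2 := by
  rw [← integral_twoPoint, ← hlaw,
    integral_map hZ.aemeasurable (hlaw ▸ integrable_twoPoint σ f).aestronglyMeasurable]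

theorem integral_of_map_eq_twoPoint (hZ : Measurable Z) (hlaw : P.map Z = twoPoint σ) :
    ∫ ω, Z ω ∂P = 0 := by
  simpa using integral_comp_of_map_eq_twoPoint hZ hlaw id

theorem integral_add_div_two_le_integral_max_sub [IsProbabilityMeasure P] {Y : Ω → ℝ}
    (hY : Integrable Y P) (hZ : Measurable Z) (hlaw : P.map Z = twoPoint σ) (hσ : σ ≠ 0)
    (hYZ : IndepFun Y Z P) (c : ℝ) :
    (∫ ω, Y ω ∂P + c * σ) / 2 ≤ ∫ ω, max (Y ω - c * Z ω) 0 ∂P := by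
  set ψ : ℝ → ℝ := fun t => if t = -σ then 1 else 0
  have hψ : Measurable ψ := measurable_const.ite (measurableSet_singleton _) measurable_const
  have hψZ : ∫ ω, ψ (Z ω) ∂P = 1 / 2 := by
    have : σ ≠ -σ := fun h => hσ (by linarith)
    rw [integral_comp_of_map_eq_twoPoint hZ hlaw]
    simp [ψ, this]
  have hYc : Integrable (fun ω => Y ω + c * σ) P := hY.add (integrable_const _)
  have hprod : ∫ ω, (Y ω + c * σ) * ψ (Z ω) ∂P = (∫ ω, Y ω ∂P + c * σ) / 2 := by
    have h := (hYZ.comp (measurable_add_const (c * σ)) hψ).integral_fun_mul_eq_mul_integral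
      hYc.aestronglyMeasurable (hψ.comp hZ).aestronglyMeasurable
    simp only [Function.comp_apply] at h
    rw [h, hψZ, integral_add hY (integrable_const _), integral_const]
    simp
    ring
  have hle : ∀ ω, (Y ω + c * σ) * ψ (Z ω) ≤ max (Y ω - c * Z ω) 0 := by
    intro ω
    by_cases h : Z ω = -σ <;> simp [ψ, h]
  have hψle : ∀ t, ‖ψ t‖ ≤ 1 := fun t => by by_cases h : t = -σ <;> simp [ψ, h]
  rw [← hprod]
  refine integral_mono ?_ ?_ hle
  · exact hYc.mul_bdd (hψ.comp hZ).aestronglyMeasurable (ae_of_all _ fun ω => hψle (Z ω))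
  · exact (hY.sub ((integrable_comp_of_map_eq_twoPoint hZ hlaw id).const_mul c)).pos_part

end TwoPointLaw

theorem ProbabilityTheory.iIndepFun.indepFun_of_measurable_iSup_s16 {Ω ι β γ : Type*}
    [MeasurableSpace Ω] {μ : Measure Ω} [MeasurableSpace β] [MeasurableSpace γ] {f : ι → Ω → β}
    (hf : iIndepFun f μ) (hfm : ∀ i, Measurable (f i)) {S : Set ι} {j : ι} (hj : j ∉ S)
    {Y : Ω → γ} (hY : Measurable[⨆ i ∈ S, MeasurableSpace.comap (f i) inferInstance] Y) :
    IndepFun Y (f j) μ := by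
  rw [IndepFun_iff_Indep]
  refine indep_of_indep_of_le (indep_iSup_of_disjoint (fun i => (hfm i).comap_le) hf.iIndep
    (Set.disjoint_singleton_right.2 hj)) hY.comap_le ?_
  simp

theorem le_pow_mul_of_le_mul {u : ℕ → ℝ} {b s D : ℝ} (hb : 0 ≤ b) (hbs : b ≤ s) (hD : 0 ≤ D)
    (h0 : u 0 ≤ D) (hu : ∀ n, u (n + 1) ≤ b * u n) (n : ℕ) : u n ≤ s ^ n * D := by
  induction n with
  | zero => simpa using h0
  | succ n ih =>
    have hpos : max (u n) 0 ≤ s ^ n * D :=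
      max_le ih (mul_nonneg (pow_nonneg (hb.trans hbs) n) hD)
    calc u (n + 1) ≤ b * u n := hu n
      _ ≤ b * max (u n) 0 := mul_le_mul_of_nonneg_left (le_max_left _ _) hb
      _ ≤ s * max (u n) 0 := mul_le_mul_of_nonneg_right hbs (le_max_right _ _)
      _ ≤ s * (s ^ n * D) := mul_le_mul_of_nonneg_left hpos (hb.trans hbs)
      _ = s ^ (n + 1) * D := by ring

section MeanDrift

variable {a c : ℝ} {m p : ℕ → ℝ}

theorem succ_le_one_sub_mul (ha : 0 ≤ a) (hrec : ∀ j, m (j + 1) = (1 - a) * m j - a * p j)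
    (hp : ∀ j, 0 ≤ p j) (j : ℕ) : m (j + 1) ≤ (1 - a) * m j := by
  nlinarith [hrec j, mul_nonneg ha (hp j)]

theorem add_two_add_quarter_le (ha : 0 ≤ a) (hc : 0 ≤ c)
    (hrec : ∀ j, m (j + 1) = (1 - a) * m j - a * p j)
    (hkey : ∀ j, (m (j + 1) + c) / 2 ≤ p (j + 1)) (j : ℕ) :
    m (j + 2) + c / 4 ≤ (1 - 3 * a / 2) * (m (j + 1) + c / 4) := by
  nlinarith [hrec (j + 1), mul_le_mul_of_nonneg_left (hkey j) ha, mul_nonneg ha hc]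

theorem mean_drift (ha : 0 ≤ a) (ha2 : a ≤ 1 / 2) (hc : 0 ≤ c)
    (hrec : ∀ j, m (j + 1) = (1 - a) * m j - a * p j) (hp : ∀ j, 0 ≤ p j)
    (hkey : ∀ j, (m (j + 1) + c) / 2 ≤ p (j + 1)) (hm0 : m 0 ≤ 0) {k : ℕ} (hk : 2 ≤ k) :
    (m 0 ≤ -c / 48 → m k ≤ -c / 48) ∧
    (-c / 48 < m 0 → m k ≤ -c / 4 + (1 - a) ^ ((k : ℝ) / 2) * (m 0 + c / 4)) := by
  obtain ⟨n, rfl⟩ : ∃ n, k = n + 2 := ⟨k - 2, by omega⟩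
  have hb : 0 ≤ 1 - 3 * a / 2 := by linarith
  have hstep (j : ℕ) := add_two_add_quarter_le ha hc hrec hkey (j + 1)
  have hm1 : m 1 ≤ (1 - a) * m 0 := succ_le_one_sub_mul ha hrec hp 0
  have hm2 : m 2 + c / 4 ≤ (1 - 3 * a / 2) * ((1 - a) * m 0 + c / 4) :=
    (add_two_add_quarter_le ha hc hrec hkey 0).trans
      (mul_le_mul_of_nonneg_left (by linarith) hb)
  constructor
  · intro h0
    have h1 : (1 - a) * m 0 ≤ (1 - a) * (-c / 48) := mul_le_mul_of_nonneg_left h0 (by linarith)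
    have hbase : m 2 + c / 4 ≤ 11 * c / 48 := by
      nlinarith [mul_le_mul_of_nonneg_left h1 hb, mul_nonneg ha hc,
        mul_nonneg (mul_nonneg ha ha) hc]
    have := le_pow_mul_of_le_mul (u := fun j => m (j + 2) + c / 4) hb
      (show 1 - 3 * a / 2 ≤ 1 by linarith) (by positivity) hbase hstep n
    simp only [one_pow, one_mul] at this
    linarith
  · intro h0
    set s := √(1 - a)
    have hs : (1 - a) ^ (((n + 2 : ℕ) : ℝ) / 2) = s ^ n * (1 - a) := by
      rw [Real.rpow_div_two_eq_sqrt _ (by linarith), Real.rpow_natCast, pow_add,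
        Real.sq_sqrt (by linarith)]
    have hbs : 1 - 3 * a / 2 ≤ s := Real.le_sqrt_of_sq_le (by nlinarith)
    have hq : 0 ≤ 3 / 2 * (1 - a) * m 0 + c / 8 := by
      nlinarith [mul_nonneg ha (neg_nonneg.2 hm0)]
    have hbase : m 2 + c / 4 ≤ (1 - a) * (m 0 + c / 4) := by nlinarith [mul_nonneg ha hq]
    have := le_pow_mul_of_le_mul (u := fun j => m (j + 2) + c / 4) hb hbs
      (by nlinarith) hbase hstep n
    rw [hs, mul_assoc]
    linarith

end MeanDrift

section SGD

variable {Ω : Type*} {L η : ℝ} {x0 : Ω → ℝ} {z X : ℕ → Ω → ℝ}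

theorem measurable_gDeriv (L : ℝ) : Measurable (gDeriv L) := by
  unfold gDeriv
  fun_prop

theorem sub_mul_gDeriv (L η x : ℝ) : x - η * gDeriv L x = (1 - L * η) * x - L * η * max x 0 := by
  unfold gDeriv
  ring

theorem measurable_iSup_comap_sgd {f : ℕ → Ω → ℝ} (hf0 : f 0 = x0) (hf : ∀ j, f (j + 1) = z j)
    (hX0 : ∀ ω, X 0 ω = x0 ω)
    (hXup : ∀ j ω, X (j + 1) ω = X j ω - η * (gDeriv L (X j ω) + z j ω)) {i j : ℕ}
    (hij : i ≤ j) :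
    Measurable[⨆ l ∈ Set.Iic j, MeasurableSpace.comap (f l) inferInstance] (X i) := by
  have hf_meas : ∀ l ≤ j,
      Measurable[⨆ l ∈ Set.Iic j, MeasurableSpace.comap (f l) inferInstance] (f l) :=
    fun l hl => measurable_iff_comap_le.2
      (le_iSup₂ (f := fun l (_ : l ∈ Set.Iic j) => MeasurableSpace.comap (f l) inferInstance) l hl)
  induction i with
  | zero =>
    rw [funext hX0, ← hf0]
    exact hf_meas 0 hij
  | succ i ih =>
    have hXi := ih (by omega)
    rw [funext (hXup i), ← hf]
    exact hXi.sub ((((measurable_gDeriv L).comp hXi).add (hf_meas (i + 1) hij)).const_mul η)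

variable [MeasurableSpace Ω] {P : Measure Ω}

theorem MeasureTheory.Integrable.gDeriv_comp {Y : Ω → ℝ} (hY : Integrable Y P) :
    Integrable (fun ω => gDeriv L (Y ω)) P :=
  (hY.const_mul L).add (hY.pos_part.const_mul L)

theorem integrable_sgd (hx0 : Integrable x0 P) (hz : ∀ j, Integrable (z j) P)
    (hX0 : ∀ ω, X 0 ω = x0 ω)
    (hXup : ∀ j ω, X (j + 1) ω = X j ω - η * (gDeriv L (X j ω) + z j ω)) (j : ℕ) :
    Integrable (X j) P := by
  induction j with
  | zero => rwa [funext hX0]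
  | succ j ih => rw [funext (hXup j)]; exact ih.sub ((ih.gDeriv_comp.add (hz j)).const_mul η)

theorem integral_sgd_succ_eq (hXup : ∀ j ω, X (j + 1) ω = X j ω - η * (gDeriv L (X j ω) + z j ω))
    {j : ℕ} (hX : Integrable (X j) P) (hz : Integrable (z j) P) (hz0 : ∫ ω, z j ω ∂P = 0) :
    ∫ ω, X (j + 1) ω ∂P = ∫ ω, X j ω - η * gDeriv L (X j ω) ∂P := by
  have hY : Integrable (fun ω => X j ω - η * gDeriv L (X j ω)) P :=
    hX.sub (hX.gDeriv_comp.const_mul η)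
  simp_rw [hXup j, mul_add, ← sub_sub]
  rw [integral_sub hY (hz.const_mul η), integral_const_mul, hz0, mul_zero, sub_zero]

theorem integral_sgd_succ (hXup : ∀ j ω, X (j + 1) ω = X j ω - η * (gDeriv L (X j ω) + z j ω))
    {j : ℕ} (hX : Integrable (X j) P) (hz : Integrable (z j) P) (hz0 : ∫ ω, z j ω ∂P = 0) :
    ∫ ω, X (j + 1) ω ∂P
      = (1 - L * η) * ∫ ω, X j ω ∂P - L * η * ∫ ω, max (X j ω) 0 ∂P := by
  simp_rw [integral_sgd_succ_eq hXup hX hz hz0, sub_mul_gDeriv]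
  rw [integral_sub (hX.const_mul _) (hX.pos_part.const_mul _), integral_const_mul,
    integral_const_mul]

theorem integral_sgd_succ_add_div_two_le [IsProbabilityMeasure P] {σ : ℝ} (hσ : σ ≠ 0)
    (hXup : ∀ j ω, X (j + 1) ω = X j ω - η * (gDeriv L (X j ω) + z j ω))
    {j : ℕ} (hX : Integrable (X j) P) (hzm : Measurable (z j)) (hlaw : P.map (z j) = twoPoint σ)
    (hXz : IndepFun (X j) (z j) P) :
    (∫ ω, X (j + 1) ω ∂P + η * σ) / 2 ≤ ∫ ω, max (X (j + 1) ω) 0 ∂P := by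
  have hY : Integrable (fun ω => X j ω - η * gDeriv L (X j ω)) P :=
    hX.sub (hX.gDeriv_comp.const_mul η)
  have hYz : IndepFun (fun ω => X j ω - η * gDeriv L (X j ω)) (z j) P :=
    hXz.comp (measurable_id.sub ((measurable_gDeriv L).const_mul η)) measurable_id
  rw [integral_sgd_succ_eq hXup hX (integrable_comp_of_map_eq_twoPoint hzm hlaw id)
    (integral_of_map_eq_twoPoint hzm hlaw)]
  convert integral_add_div_two_le_integral_max_sub hY hzm hlaw hσ hYz η using 4 with ω
  rw [hXup]
  ring

end SGD

/-- Fix `L, η, σ > 0` with `Lη ≤ 1/2` and `k ≥ 2`. Let `x₀` be an integrable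
random initial point with `E[x₀] ≤ 0`, and let `X` be the SGD iterates on `g_L` with stepsize
`η` and i.i.d. noise `z₀, z₁, …` uniform on `{±σ}`, independent of `x₀`. Then
`E[x_k] ≤ −ησ/48` if `E[x₀] ≤ −ησ/48`, and
`E[x_k] ≤ −ησ/4 + (1 − Lη)^{k/2}(E[x₀] + ησ/4)` if `−ησ/48 < E[x₀] ≤ 0`. -/
theorem sgd_k_step_negative_drift
    (L η σ : ℝ) (hL : 0 < L) (hη : 0 < η) (hσ : 0 < σ) (hLη : L * η ≤ 1 / 2)
    (k : ℕ) (hk : 2 ≤ k)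
    (Ω : Type*) [MeasurableSpace Ω] (P : Measure Ω) [IsProbabilityMeasure P]
    (x0 : Ω → ℝ) (z : ℕ → Ω → ℝ)
    (hx0meas : Measurable x0) (hx0int : Integrable x0 P)
    (hx0mean : ∫ ω, x0 ω ∂P ≤ 0)
    (hzmeas : ∀ j, Measurable (z j))
    (hzlaw : ∀ j, Measure.map (z j) P = twoPoint σ)
    (hindep : iIndepFun (m := fun _ => inferInstance)
      (fun j : ℕ => Nat.casesOn (motive := fun _ => Ω → ℝ) j x0 z) P)
    (X : ℕ → Ω → ℝ)
    (hX0 : ∀ ω, X 0 ω = x0 ω)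
    (hXup : ∀ j ω, X (j + 1) ω = X j ω - η * (gDeriv L (X j ω) + z j ω)) :
    (∫ ω, x0 ω ∂P ≤ -(η * σ) / 48 → ∫ ω, X k ω ∂P ≤ -(η * σ) / 48) ∧
    (-(η * σ) / 48 < ∫ ω, x0 ω ∂P →
      ∫ ω, X k ω ∂P ≤ -(η * σ) / 4
        + (1 - L * η) ^ ((k : ℝ) / 2) * ((∫ ω, x0 ω ∂P) + η * σ / 4)) := by
  have hzint (j : ℕ) := integrable_comp_of_map_eq_twoPoint (hzmeas j) (hzlaw j) id
  have hXint := integrable_sgd hx0int hzint hX0 hXup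
  have hXz (j : ℕ) : IndepFun (X j) (z j) P :=
    hindep.indepFun_of_measurable_iSup_s16 (by rintro (_ | i); exacts [hx0meas, hzmeas i])
      (j := j + 1) (S := Set.Iic j) (by simp)
      (measurable_iSup_comap_sgd rfl (fun _ => rfl) hX0 hXup le_rfl)
  have hmean0 : ∫ ω, x0 ω ∂P = ∫ ω, X 0 ω ∂P := by simp_rw [hX0]
  rw [hmean0] at hx0mean ⊢
  exact mean_drift (m := fun j => ∫ ω, X j ω ∂P) (p := fun j => ∫ ω, max (X j ω) 0 ∂P)
    (mul_pos hL hη).le hLη (mul_pos hη hσ).le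
    (fun j => integral_sgd_succ hXup (hXint j) (hzint j)
      (integral_of_map_eq_twoPoint (hzmeas j) (hzlaw j)))
    (fun j => integral_nonneg fun ω => le_max_right _ _)
    (fun j => integral_sgd_succ_add_div_two_le hσ.ne' hXup (hXint j) (hzmeas j) (hzlaw j) (hXz j))
    hx0mean hk
end

section
/- Consider the objective F(x) = (μ/2)(x₁ − b)² + (H/2)(x₂ − b)² + (L/2)((x₃ − c)² + [x₃ − c]₊²) on ℝ³ with stochastic gradient ∇f(x; z) = ∇F(x) + (0, 0, z)ᵀ, where P[z = σ] = P[z = −σ] = 1/2. Let x̂ be the output of local SGD with M machines, K local steps per round, R rounds, fixed stepsize η, initialized at 0. Then with probability 1: x̂₁ = b(1 − (1 − ημ)^{KR}) and x̂₂ = b(1 − (1 − ηH)^{KR}); consequently, if η < 1/(2μKR) then (μ/2)(x̂₁ − b)² ≥ μb²/8, and if η > 2/H then (H/2)(x̂₂ − b)² ≥ Hb²/2. -/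
open scoped BigOperators

/-- The stochastic gradient `∇f(x; z) = ∇F(x) + (0,0,z)ᵀ` of the hard instance
`F(x) = (μ/2)(x₁−b)² + (H/2)(x₂−b)² + (L/2)((x₃−c)² + [x₃−c]₊²)`. -/
noncomputable def hardGrad (μ H L b c : ℝ) (x : Fin 3 → ℝ) (zv : ℝ) : Fin 3 → ℝ :=
  ![μ * (x 0 - b), H * (x 1 - b), L * (x 2 - c) + L * max (x 2 - c) 0 + zv]

/-!
Averaging is affine, so a coordinate on which every machine agrees stays in agreement after a
communication round. On the first two coordinates the local step `x ↦ x - η ∇f(x; z)` ignores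
the noise and acts on that coordinate alone as gradient descent on a one-dimensional quadratic,
so after `KR` steps every machine, hence the average, holds `b + (1 - ηa)^{KR} (0 - b)` with
`a = μ` resp. `a = H`. The two lower bounds are then Bernoulli's inequality
`(1 - ημ)^{KR} ≥ 1 - ημKR > 1/2` for the small stepsize and `|1 - ηH| > 1` for the large one.
-/

theorem inv_card_smul_sum_apply_of_forall_eq {M : ℕ} {d : Type*} (hM : M ≠ 0)
    {v : Fin M → d → ℝ} {i : d} {y : ℝ} (hv : ∀ m, v m i = y) :
    ((M : ℝ)⁻¹ • ∑ m, v m) i = y := by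
  simp only [Pi.smul_apply, Finset.sum_apply, hv, Finset.sum_const, Finset.card_univ,
    Fintype.card_fin, nsmul_eq_mul, smul_eq_mul]
  field_simp

theorem localSGD_apply_eq_iterate {M K : ℕ} {d Z : Type*} {η : ℝ}
    {g : (d → ℝ) → Z → d → ℝ} {z : ℕ → Fin M → Z} {x : ℕ → Fin M → d → ℝ}
    (i : d) (φ : ℝ → ℝ) (y₀ : ℝ) (hφ : ∀ v w, (v - η • g v w) i = φ (v i))
    (hx0 : ∀ m, x 0 m i = y₀)
    (hxup : ∀ t m, x (t + 1) m =
      if (t + 1) % K = 0 then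
        (M : ℝ)⁻¹ • ∑ m', (x t m' - η • g (x t m') (z t m'))
      else x t m - η • g (x t m) (z t m)) (t : ℕ) (m : Fin M) :
    x t m i = φ^[t] y₀ := by
  induction t generalizing m with
  | zero => exact hx0 m
  | succ t ih =>
    have hstep : ∀ m', (x t m' - η • g (x t m') (z t m')) i = φ^[t + 1] y₀ := fun m' => by
      rw [hφ, ih, Function.iterate_succ_apply']
    rw [hxup]
    split_ifs
    · exact inv_card_smul_sum_apply_of_forall_eq (NeZero.of_pos m.pos).out hstep
    · exact hstep m

theorem iterate_sub_mul_mul_sub (η a b y₀ : ℝ) (t : ℕ) :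
    (fun y => y - η * (a * (y - b)))^[t] y₀ = b + (1 - η * a) ^ t * (y₀ - b) := by
  induction t with
  | zero => simp
  | succ t ih => rw [Function.iterate_succ_apply', ih, pow_succ]; ring

theorem half_le_one_sub_mul_pow {η μ : ℝ} {n : ℕ} (hμ : 0 ≤ μ) (h : η < 1 / (2 * μ * n)) :
    1 / 2 ≤ (1 - η * μ) ^ n := by
  rcases hμ.eq_or_lt with rfl | hμ
  · norm_num
  rcases Nat.eq_zero_or_pos n with rfl | hn
  · norm_num
  have hn' : (1 : ℝ) ≤ n := by exact_mod_cast hn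
  have hsmall : η * μ * n < 1 / 2 := by
    rw [lt_div_iff₀ (by positivity)] at h
    linarith
  calc (1 : ℝ) / 2 ≤ 1 + n * -(η * μ) := by linarith
    _ ≤ (1 + -(η * μ)) ^ n := one_add_mul_le_pow (by nlinarith) n
    _ = (1 - η * μ) ^ n := by rw [← sub_eq_add_neg]

theorem one_le_sq_one_sub_mul_pow {η H : ℝ} (n : ℕ) (hH : 0 < H) (h : 2 / H < η) :
    1 ≤ ((1 - η * H) ^ n) ^ 2 := by
  have hηH : 2 < η * H := by rwa [div_lt_iff₀ hH] at h
  rw [pow_right_comm]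
  exact one_le_pow₀ (by nlinarith)

theorem local_sgd_deterministic_coordinates_general
    (μ H L b c η : ℝ) (hμ : 0 ≤ μ) (hH : 0 < H)
    (K M R : ℕ) (hM : 1 ≤ M)
    (z : ℕ → Fin M → ℝ)   -- an arbitrary realization of the noise
    (x : ℕ → Fin M → (Fin 3 → ℝ))
    (hx0 : ∀ m, x 0 m = 0)
    (hxup : ∀ t m, x (t + 1) m =
      if (t + 1) % K = 0 then
        (M : ℝ)⁻¹ • ∑ m' : Fin M, (x t m' - η • hardGrad μ H L b c (x t m') (z t m'))
      else x t m - η • hardGrad μ H L b c (x t m) (z t m)) :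
    ((M : ℝ)⁻¹ • ∑ m : Fin M, x (K * R) m) 0 = b * (1 - (1 - η * μ) ^ (K * R)) ∧
    ((M : ℝ)⁻¹ • ∑ m : Fin M, x (K * R) m) 1 = b * (1 - (1 - η * H) ^ (K * R)) ∧
    (η < 1 / (2 * μ * K * R) →
      μ * b ^ 2 / 8 ≤ μ / 2 * ((((M : ℝ)⁻¹ • ∑ m : Fin M, x (K * R) m) 0) - b) ^ 2) ∧
    (2 / H < η →
      H * b ^ 2 / 2 ≤ H / 2 * ((((M : ℝ)⁻¹ • ∑ m : Fin M, x (K * R) m) 1) - b) ^ 2) := by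
  have hcoord (i : Fin 3) (a : ℝ)
      (hstep : ∀ v w, (v - η • hardGrad μ H L b c v w) i = v i - η * (a * (v i - b))) :
      ((M : ℝ)⁻¹ • ∑ m, x (K * R) m) i = b * (1 - (1 - η * a) ^ (K * R)) := by
    have hmachine (m : Fin M) := localSGD_apply_eq_iterate i (fun y => y - η * (a * (y - b))) 0
      hstep (fun m => by simp [hx0]) hxup (K * R) m
    rw [inv_card_smul_sum_apply_of_forall_eq (by omega) hmachine, iterate_sub_mul_mul_sub]
    ring
  have h0 := hcoord 0 μ fun v w => by simp [hardGrad]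
  have h1 := hcoord 1 H fun v w => by simp [hardGrad]
  have hgap (q : ℝ) : (b * (1 - q) - b) ^ 2 = b ^ 2 * q ^ 2 := by ring
  refine ⟨h0, h1, fun hη => ?_, fun hη => ?_⟩
  · have hq := half_le_one_sub_mul_pow (n := K * R) hμ (by rwa [Nat.cast_mul, ← mul_assoc])
    have hq2 : (1 / 2) ^ 2 ≤ ((1 - η * μ) ^ (K * R)) ^ 2 := pow_le_pow_left₀ (by norm_num) hq 2
    rw [h0, hgap]
    nlinarith [mul_le_mul_of_nonneg_left hq2 (mul_nonneg hμ (sq_nonneg b))]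
  · have hq := one_le_sq_one_sub_mul_pow (K * R) hH hη
    rw [h1, hgap]
    nlinarith [mul_nonneg hH.le (sq_nonneg b)]

/-- For the hard instance, the noise enters only the third coordinate, so the
first two coordinates of the local SGD output `x̂` (the averaged iterate after the final round,
initialized at `0`, any realization of the noise) are deterministic:
`x̂₁ = b(1 − (1 − ημ)^{KR})` and `x̂₂ = b(1 − (1 − ηH)^{KR})`; consequently, if
`η < 1/(2μKR)` then `(μ/2)(x̂₁ − b)² ≥ μb²/8`, and if `η > 2/H` then
`(H/2)(x̂₂ − b)² ≥ Hb²/2`. -/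
theorem local_sgd_deterministic_coordinates
    (μ H L b c σ η : ℝ) (hμ : 0 ≤ μ) (hH : 0 < H) (hη : 0 < η)
    (K M R : ℕ) (hK : 1 ≤ K) (hM : 1 ≤ M) (hR : 1 ≤ R)
    (z : ℕ → Fin M → ℝ)   -- an arbitrary realization of the noise
    (x : ℕ → Fin M → (Fin 3 → ℝ))
    (hx0 : ∀ m, x 0 m = 0)
    (hxup : ∀ t m, x (t + 1) m =
      if (t + 1) % K = 0 then
        (M : ℝ)⁻¹ • ∑ m' : Fin M, (x t m' - η • hardGrad μ H L b c (x t m') (z t m'))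
      else x t m - η • hardGrad μ H L b c (x t m) (z t m)) :
    ((M : ℝ)⁻¹ • ∑ m : Fin M, x (K * R) m) 0 = b * (1 - (1 - η * μ) ^ (K * R)) ∧
    ((M : ℝ)⁻¹ • ∑ m : Fin M, x (K * R) m) 1 = b * (1 - (1 - η * H) ^ (K * R)) ∧
    (η < 1 / (2 * μ * K * R) →
      μ * b ^ 2 / 8 ≤ μ / 2 * ((((M : ℝ)⁻¹ • ∑ m : Fin M, x (K * R) m) 0) - b) ^ 2) ∧
    (2 / H < η →
      H * b ^ 2 / 2 ≤ H / 2 * ((((M : ℝ)⁻¹ • ∑ m : Fin M, x (K * R) m) 1) - b) ^ 2) :=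
  local_sgd_deterministic_coordinates_general μ H L b c η hμ hH K M R hM z x hx0 hxup
end
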